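/- arXiv:2502.11391 — 5 statements merged into one kernel-verified Lean document; each statement's English description precedes it below -/
import Mathlib

section
/- Let M be a perfect matching of a graph G and let S be a set of edges of G with S ∩ M = ∅. Then S is an anti-forcing set of M if and only if S contains at least one edge of every M-alternating cycle of G. -/
/-- `M` is a perfect matching of `G`, regarded as a set of edges: every edge of `M` is an
edge of `G` and every vertex lies in exactly one edge of `M`. -/
def IsPM {V : Type*} (G : SimpleGraph V) (M : Set (Sym2 V)) : Prop :=
  M ⊆ G.edgeSet ∧ ∀ w : V, ∃! e, e ∈ M ∧ w ∈ e

/-- A graph is matchable if it has a perfect matching. -/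
def Matchable {V : Type*} (G : SimpleGraph V) : Prop :=
  ∃ M, IsPM G M

/-- A global forcing set of `G`: a set `S` of edges of `G` distinguishing all
perfect matchings of `G`. -/
def IsGlobalForcingSet {V : Type*} (G : SimpleGraph V) (S : Set (Sym2 V)) : Prop :=
  S ⊆ G.edgeSet ∧
    ∀ M₁ M₂, IsPM G M₁ → IsPM G M₂ → M₁ ≠ M₂ → S ∩ M₁ ≠ S ∩ M₂

/-- The global forcing number: the minimum cardinality of a global forcing set. -/
noncomputable def gf {V : Type*} (G : SimpleGraph V) : ℕ :=
  sInf {n | ∃ S, IsGlobalForcingSet G S ∧ S.ncard = n}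

/-- An anti-forcing set of a perfect matching `M` of `G`: a set `S` of edges of `G`
disjoint from `M` such that `M` is the unique perfect matching of `G - S`. -/
def IsAntiForcingSet {V : Type*} (G : SimpleGraph V) (M S : Set (Sym2 V)) : Prop :=
  S ⊆ G.edgeSet ∧ S ∩ M = ∅ ∧ IsPM (G.deleteEdges S) M ∧
    ∀ M', IsPM (G.deleteEdges S) M' → M' = M

/-- The anti-forcing number of a perfect matching `M` of `G`. -/
noncomputable def af {V : Type*} (G : SimpleGraph V) (M : Set (Sym2 V)) : ℕ :=
  sInf {n | ∃ S, IsAntiForcingSet G M S ∧ S.ncard = n}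

/-- The maximum anti-forcing number of `G`. -/
noncomputable def Af {V : Type*} (G : SimpleGraph V) : ℕ :=
  sSup {n | ∃ M, IsPM G M ∧ af G M = n}

/-- A cycle `C` of `G` is `M`-alternating: `M` contains a perfect matching of `C`,
i.e. every vertex of `C` lies in exactly one edge of `C` belonging to `M`. -/
def IsAltCycle {V : Type*} (G : SimpleGraph V) (M : Set (Sym2 V)) {a : V}
    (C : G.Walk a a) : Prop :=
  C.IsCycle ∧ ∀ w ∈ C.support, ∃! e, e ∈ C.edges ∧ e ∈ M ∧ w ∈ e

/-
If an `M`-alternating cycle `C` avoids `S`, switching `M` along `C` gives a second perfect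
matching `M ∆ E(C)` of `G - S`. Conversely, if `M' ≠ M` is another perfect matching of `G - S`,
every vertex has degree `0` or `2` in `M ∆ M'`, so an edge of `M ∆ M'` lies on a cycle of
`M ∆ M'`; such a cycle alternates between `M` and `M'` and avoids `S`.
-/

open scoped symmDiff

open SimpleGraph

section

variable {V : Type*} {G : SimpleGraph V} {M M' : Set (Sym2 V)}

lemma IsPM.eq_of_mem (hM : IsPM G M) {w : V} {e f : Sym2 V} (he : e ∈ M) (hf : f ∈ M)
    (hwe : w ∈ e) (hwf : w ∈ f) : e = f :=
  (hM.2 w).unique ⟨he, hwe⟩ ⟨hf, hwf⟩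

lemma IsPM.eq_of_mk_mem (hM : IsPM G M) {v x y : V} (hx : s(v, x) ∈ M) (hy : s(v, y) ∈ M) :
    x = y :=
  Sym2.congr_right.mp (hM.eq_of_mem hx hy (Sym2.mem_mk_left _ _) (Sym2.mem_mk_left _ _))

lemma IsPM.exists_mk_mem (hM : IsPM G M) (v : V) : ∃ x, s(v, x) ∈ M := by
  obtain ⟨e, ⟨he, hve⟩, -⟩ := hM.2 v
  obtain ⟨x, rfl⟩ := Sym2.mem_iff_exists.mp hve
  exact ⟨x, he⟩

lemma IsPM.deleteEdges (hM : IsPM G M) {S : Set (Sym2 V)} (hSM : S ∩ M = ∅) :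
    IsPM (G.deleteEdges S) M := by
  refine ⟨fun e he => ?_, hM.2⟩
  rw [edgeSet_deleteEdges]
  exact ⟨hM.1 he, fun heS => (Set.disjoint_iff_inter_eq_empty.mpr hSM).notMem_of_mem_left heS he⟩

lemma SimpleGraph.Walk.IsCycle.exists_mk_mem_edges_iff {u w : V} {C : G.Walk u u}
    (hC : C.IsCycle) (hw : w ∈ C.support) :
    ∃ x y, x ≠ y ∧ ∀ z, s(w, z) ∈ C.edges ↔ z = x ∨ z = y := by
  obtain ⟨x, y, hxy, hnbr⟩ := Set.ncard_eq_two.mp (hC.ncard_neighborSet_toSubgraph_eq_two hw)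
  refine ⟨x, y, hxy, fun z => ?_⟩
  rw [← C.mem_edges_toSubgraph, Subgraph.mem_edgeSet, ← Subgraph.mem_neighborSet, hnbr]
  rfl

lemma SimpleGraph.Walk.IsCycle.exists_ne_of_mk_mem_edges {u w x : V} {C : G.Walk u u}
    (hC : C.IsCycle) (hx : s(w, x) ∈ C.edges) :
    ∃ y, y ≠ x ∧ ∀ z, s(w, z) ∈ C.edges ↔ z = x ∨ z = y := by
  obtain ⟨x₁, x₂, hne, hedges⟩ :=
    hC.exists_mk_mem_edges_iff (C.fst_mem_support_of_mem_edges hx)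
  rcases (hedges x).mp hx with rfl | rfl
  · exact ⟨x₂, hne.symm, hedges⟩
  · exact ⟨x₁, hne, fun z => (hedges z).trans or_comm⟩

lemma IsAltCycle.transfer {H : SimpleGraph V} {a : V} {C : G.Walk a a} (hC : IsAltCycle G M C)
    (hCH : ∀ e ∈ C.edges, e ∈ H.edgeSet) : IsAltCycle H M (C.transfer H hCH) := by
  refine ⟨hC.1.transfer hCH, ?_⟩
  simpa only [Walk.support_transfer, Walk.edges_transfer] using hC.2

lemma IsPM.symmDiff_edgeSet (hM : IsPM G M) {a : V} {C : G.Walk a a}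
    (hC : IsAltCycle G M C) : IsPM G (M ∆ C.edgeSet) := by
  refine ⟨fun e he => ?_, fun w => ?_⟩
  · rcases he with ⟨he, -⟩ | ⟨he, -⟩
    exacts [hM.1 he, C.edges_subset_edgeSet he]
  by_cases hw : w ∈ C.support
  · obtain ⟨e₀, ⟨he₀C, he₀M, hwe₀⟩, huniq⟩ := hC.2 w hw
    obtain ⟨x, rfl⟩ := Sym2.mem_iff_exists.mp hwe₀
    obtain ⟨y, hyx, hedges⟩ := hC.1.exists_ne_of_mk_mem_edges he₀C
    have hyC : s(w, y) ∈ C.edges := (hedges y).mpr (Or.inr rfl)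
    have hyM : s(w, y) ∉ M := fun hyM =>
      hyx (Sym2.congr_right.mp (huniq _ ⟨hyC, hyM, Sym2.mem_mk_left _ _⟩))
    refine ⟨s(w, y), ⟨Or.inr ⟨hyC, hyM⟩, Sym2.mem_mk_left _ _⟩, ?_⟩
    rintro e ⟨he, hwe⟩
    obtain ⟨z, rfl⟩ := Sym2.mem_iff_exists.mp hwe
    rcases he with ⟨hzM, hzC⟩ | ⟨hzC, hzM⟩
    · exact absurd (hM.eq_of_mk_mem hzM he₀M ▸ he₀C) hzC
    · rcases (hedges z).mp hzC with rfl | rfl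
      exacts [absurd he₀M hzM, rfl]
  · obtain ⟨e, ⟨heM, hwe⟩, huniq⟩ := hM.2 w
    have hoff : ∀ f ∈ C.edgeSet, w ∉ f := fun f hf hwf =>
      hw (Walk.mem_support_of_mem_edges hf hwf)
    refine ⟨e, ⟨Or.inl ⟨heM, fun heC => hoff e heC hwe⟩, hwe⟩, ?_⟩
    rintro f ⟨⟨hfM, -⟩ | ⟨hfC, -⟩, hwf⟩
    exacts [huniq f ⟨hfM, hwf⟩, absurd hwf (hoff f hfC)]

lemma isCycles_fromEdgeSet_symmDiff (hM : IsPM G M) (hM' : IsPM G M') :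
    (fromEdgeSet (M ∆ M')).IsCycles := by
  intro v hv
  obtain ⟨x, hx⟩ := hM.exists_mk_mem v
  obtain ⟨x', hx'⟩ := hM'.exists_mk_mem v
  have hmemM : ∀ z, s(v, z) ∈ M ↔ z = x :=
    fun z => ⟨fun hz => hM.eq_of_mk_mem hz hx, by rintro rfl; exact hx⟩
  have hmemM' : ∀ z, s(v, z) ∈ M' ↔ z = x' :=
    fun z => ⟨fun hz => hM'.eq_of_mk_mem hz hx', by rintro rfl; exact hx'⟩
  have hvx : v ≠ x := (hM.1 hx : G.Adj v x).ne
  have hvx' : v ≠ x' := (hM'.1 hx' : G.Adj v x').ne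
  have hnbr : ∀ z, z ∈ (fromEdgeSet (M ∆ M')).neighborSet v ↔
      (z = x ∧ z ≠ x' ∨ z = x' ∧ z ≠ x) ∧ v ≠ z := by
    intro z
    rw [mem_neighborSet, fromEdgeSet_adj, Set.mem_symmDiff, hmemM, hmemM']
  have hxx' : x ≠ x' := by
    rintro rfl
    obtain ⟨z, hz⟩ := hv
    grind
  rw [show (fromEdgeSet (M ∆ M')).neighborSet v = {x, x'} by ext z; grind, Set.ncard_pair hxx']

lemma isAltCycle_of_edges_subset_symmDiff (hM : IsPM G M) (hM' : IsPM G M') {a : V}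
    {C : G.Walk a a} (hC : C.IsCycle) (hCM : ∀ e ∈ C.edges, e ∈ M ∆ M') : IsAltCycle G M C := by
  refine ⟨hC, fun w hw => ?_⟩
  obtain ⟨x, y, hxy, hedges⟩ := hC.exists_mk_mem_edges_iff hw
  have hxC := (hedges x).mpr (Or.inl rfl)
  have hyC := (hedges y).mpr (Or.inr rfl)
  have unique_of_mem : ∀ z, s(w, z) ∈ C.edges → s(w, z) ∈ M →
      ∃! e, e ∈ C.edges ∧ e ∈ M ∧ w ∈ e := fun z hzC hzM =>
    ⟨s(w, z), ⟨hzC, hzM, Sym2.mem_mk_left _ _⟩,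
      fun e he => hM.eq_of_mem he.2.1 hzM he.2.2 (Sym2.mem_mk_left _ _)⟩
  by_cases hxM : s(w, x) ∈ M
  · exact unique_of_mem x hxC hxM
  by_cases hyM : s(w, y) ∈ M
  · exact unique_of_mem y hyC hyM
  -- otherwise both cycle edges at `w` would belong to `M'`
  have hxM' := ((hCM _ hxC).resolve_left (fun h => hxM h.1)).1
  have hyM' := ((hCM _ hyC).resolve_left (fun h => hyM h.1)).1
  exact absurd (hM'.eq_of_mk_mem hxM' hyM') hxy

theorem exists_isAltCycle_of_ne [Finite V] (hM : IsPM G M) (hM' : IsPM G M') (hne : M ≠ M') :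
    ∃ (a : V) (C : G.Walk a a), IsAltCycle G M C := by
  have hsub : M ∆ M' ⊆ G.edgeSet := by
    rintro e (⟨heM, -⟩ | ⟨heM', -⟩)
    exacts [hM.1 heM, hM'.1 heM']
  have hH : (fromEdgeSet (M ∆ M')).edgeSet ⊆ M ∆ M' := by
    rw [edgeSet_fromEdgeSet]
    exact Set.sdiff_subset
  obtain ⟨e, he⟩ := Set.symmDiff_nonempty.mpr hne
  induction e using Sym2.ind with | _ v w => ?_
  have hvw : (fromEdgeSet (M ∆ M')).Adj v w := (fromEdgeSet_adj _).mpr ⟨he, (hsub he).ne⟩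
  obtain ⟨a, C, hC, -⟩ := adj_and_reachable_delete_edges_iff_exists_cycle.mp
    ⟨hvw, (isCycles_fromEdgeSet_symmDiff hM hM').reachable_deleteEdges hvw⟩
  have hCH : ∀ e ∈ C.edges, e ∈ M ∆ M' := fun e he => hH (C.edges_subset_edgeSet he)
  have hCG : ∀ e ∈ C.edges, e ∈ G.edgeSet := fun e he => hsub (hCH e he)
  refine ⟨a, C.transfer G hCG, isAltCycle_of_edges_subset_symmDiff hM hM' (hC.transfer hCG) ?_⟩
  simpa only [Walk.edges_transfer] using hCH

end

/-- Let `M` be a perfect matching of `G` and `S` a set of edges of `G` with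
`S ∩ M = ∅`.  Then `S` is an anti-forcing set of `M` if and only if `S` contains
at least one edge of every `M`-alternating cycle of `G`. -/
theorem statement_3 {V : Type*} [Fintype V] (G : SimpleGraph V) (M S : Set (Sym2 V))
    (hM : IsPM G M) (hS : S ⊆ G.edgeSet) (hSM : S ∩ M = ∅) :
    IsAntiForcingSet G M S ↔
      ∀ (a : V) (C : G.Walk a a), IsAltCycle G M C → ∃ e ∈ S, e ∈ C.edges := by
  have hMdel := hM.deleteEdges hSM
  constructor
  · rintro ⟨-, -, -, huniq⟩ a C hC
    by_contra! hCS
    have hCGS : ∀ e ∈ C.edges, e ∈ (G.deleteEdges S).edgeSet := fun e he => by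
      rw [edgeSet_deleteEdges]
      exact ⟨C.edges_subset_edgeSet he, fun heS => hCS e heS he⟩
    obtain ⟨e, ⟨heC, heM, -⟩, -⟩ := hC.2 a C.start_mem_support
    have hswitch := huniq _ (hMdel.symmDiff_edgeSet (hC.transfer hCGS))
    have : e ∉ M ∆ (C.transfer _ hCGS).edgeSet := by simp [Set.mem_symmDiff, heM, heC]
    rw [hswitch] at this
    exact this heM
  · intro hcycle
    refine ⟨hS, hSM, hMdel, fun M' hM' => ?_⟩
    by_contra hne
    obtain ⟨a, C, hC⟩ := exists_isAltCycle_of_ne hMdel hM' (Ne.symm hne)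
    have hCG : ∀ e ∈ C.edges, e ∈ G.edgeSet := fun e he =>
      edgeSet_mono (deleteEdges_le S) (C.edges_subset_edgeSet he)
    obtain ⟨e, heS, heC⟩ := hcycle a _ (hC.transfer hCG)
    rw [Walk.edges_transfer] at heC
    have heGS := C.edges_subset_edgeSet heC
    rw [edgeSet_deleteEdges] at heGS
    exact heGS.2 heS
end

section
/- Let G be a matchable graph and S a set of edges of G. Then S is a global forcing set of G if and only if S contains at least one edge of every conformal cycle of G. -/
/-- A cycle `C` of `G` is conformal: `G - V(C)` has a perfect matching. -/
def IsConformalCycle {V : Type*} (G : SimpleGraph V) {a : V} (C : G.Walk a a) : Prop :=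
  C.IsCycle ∧ Matchable (SimpleGraph.induce {v : V | v ∉ C.support} G)

open SimpleGraph

section

variable {V : Type*} {G : SimpleGraph V}

theorem Set.inter_ne_inter_iff {α : Type*} {s t u : Set α} :
    s ∩ t ≠ s ∩ u ↔ ∃ a ∈ s, a ∈ symmDiff t u := by
  rw [ne_eq, ← symmDiff_eq_bot, ← Set.inter_symmDiff_distrib_left, Set.bot_eq_empty, ← ne_eq,
    ← Set.nonempty_iff_ne_empty]
  rfl

theorem Sym2.existsUnique_mem_and_mem_iff {α : Type*} {s : Set (Sym2 α)} {a : α} :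
    (∃! e, e ∈ s ∧ a ∈ e) ↔ ∃! b, s(a, b) ∈ s := by
  constructor
  · rintro ⟨e, ⟨he, ha⟩, huniq⟩
    refine ⟨Sym2.Mem.other ha, show s(a, _) ∈ s from (Sym2.other_spec ha).symm ▸ he,
      fun b hb => ?_⟩
    have := huniq _ ⟨hb, Sym2.mem_mk_left _ _⟩
    rw [← Sym2.other_spec ha] at this
    exact Sym2.congr_right.mp this
  · rintro ⟨b, hb, huniq⟩
    refine ⟨s(a, b), ⟨hb, Sym2.mem_mk_left _ _⟩, fun e ⟨he, ha⟩ => ?_⟩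
    rw [← Sym2.other_spec ha] at he ⊢
    rw [huniq _ he]

theorem Sym2.mk_mem_image_map_val_iff {U : Set V} {s : Set (Sym2 U)} {v w : V} :
    s(v, w) ∈ Sym2.map (↑) '' s ↔ ∃ (hv : v ∈ U) (hw : w ∈ U), s(⟨v, hv⟩, ⟨w, hw⟩) ∈ s := by
  constructor
  · rintro ⟨e, he, hew⟩
    induction e with
    | h a b =>
      rw [Sym2.map_mk, Sym2.eq_iff] at hew
      rcases hew with ⟨rfl, rfl⟩ | ⟨rfl, rfl⟩
      · exact ⟨a.2, b.2, he⟩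
      · exact ⟨b.2, a.2, Sym2.eq_swap ▸ he⟩
  · rintro ⟨hv, hw, h⟩
    exact ⟨_, h, rfl⟩

theorem SimpleGraph.fromEdgeSet_symmDiff (s t : Set (Sym2 V)) :
    fromEdgeSet (symmDiff s t) = symmDiff (fromEdgeSet s) (fromEdgeSet t) := by
  rw [symmDiff_def, symmDiff_def, ← fromEdgeSet_sdiff, ← fromEdgeSet_sdiff]
  exact fromEdgeSet_union _ _

theorem isPM_iff {M : Set (Sym2 V)} : IsPM G M ↔ M ⊆ G.edgeSet ∧ ∀ v, ∃! w, s(v, w) ∈ M := by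
  simp only [IsPM, Sym2.existsUnique_mem_and_mem_iff]

theorem SimpleGraph.Walk.IsPath.exists_perfectMatching_of_odd_length :
    ∀ {u v : V} {p : G.Walk u v}, p.IsPath → Odd p.length →
      ∃ N ⊆ p.edgeSet, ∀ x ∈ p.support, ∃! y, s(x, y) ∈ N
  | _, _, .nil, _, hodd => by simp at hodd
  | u, _, .cons (v := x) hux .nil, _, _ => by
    refine ⟨{s(u, x)}, by simp [Walk.edgeSet], fun z hz => ?_⟩
    simp only [Walk.support_cons, Walk.support_nil, List.mem_cons, List.not_mem_nil,
      or_false] at hz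
    rcases hz with rfl | rfl
    · exact ⟨x, rfl, fun y hy => Sym2.congr_right.mp hy⟩
    · refine ⟨u, Sym2.eq_swap, fun y hy => ?_⟩
      rcases Sym2.eq_iff.mp hy with ⟨h, -⟩ | ⟨-, h⟩
      · exact absurd h.symm (G.ne_of_adj hux)
      · exact h
  | u, _, .cons (v := x) _ (.cons _ q), hp, hodd => by
    simp only [Walk.cons_isPath_iff, Walk.support_cons, List.mem_cons, not_or] at hp
    obtain ⟨⟨hq, hxq⟩, hux', huq⟩ := hp
    obtain ⟨N, hNq, hN⟩ :=
      hq.exists_perfectMatching_of_odd_length (by simpa [Nat.odd_add_one] using hodd)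
    have hNsupp : ∀ z y, s(z, y) ∈ N → z ∈ q.support :=
      fun z y h => q.fst_mem_support_of_mem_edges (hNq h)
    refine ⟨insert s(u, x) N, ?_, fun z hz => ?_⟩
    · rw [Set.insert_subset_iff]
      exact ⟨by simp [Walk.edgeSet], hNq.trans fun e he => by simp_all [Walk.edgeSet]⟩
    simp only [Walk.support_cons, List.mem_cons] at hz
    rcases hz with rfl | rfl | hz
    · refine ⟨x, Set.mem_insert _ _, fun y hy => ?_⟩
      exact hy.elim Sym2.congr_right.mp fun h => absurd (hNsupp _ _ h) huq
    · refine ⟨u, Or.inl Sym2.eq_swap, fun y hy => ?_⟩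
      rcases hy with h | h
      · rcases Sym2.eq_iff.mp h with ⟨h, -⟩ | ⟨-, h⟩
        · exact absurd h.symm hux'
        · exact h
      · exact absurd (hNsupp _ _ h) hxq
    · obtain ⟨y, hy, huniq⟩ := hN z hz
      refine ⟨y, Or.inr hy, fun y' hy' => hy'.elim (fun h => ?_) (huniq y')⟩
      rcases Sym2.mem_iff.mp (h ▸ Sym2.mem_mk_left z y') with rfl | rfl
      · exact absurd hz huq
      · exact absurd hz hxq

namespace IsPM

variable {M M₁ M₂ : Set (Sym2 V)}

theorem eq_of_mk_mem_s4 (hM : IsPM G M) {v w x : V} (hw : s(v, w) ∈ M) (hx : s(v, x) ∈ M) :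
    w = x :=
  ((isPM_iff.mp hM).2 v).unique hw hx

theorem isPerfectMatching_top (hM : IsPM G M) :
    (⊤ : (fromEdgeSet M).Subgraph).IsPerfectMatching := by
  rw [isPM_iff] at hM
  refine Subgraph.isPerfectMatching_iff.mpr fun v => ?_
  refine (existsUnique_congr fun w => ?_).mp (hM.2 v)
  rw [Subgraph.top_adj, fromEdgeSet_adj, iff_self_and]
  exact fun h => G.ne_of_adj (hM.1 h)

theorem even_card [Finite V] (hM : IsPM G M) : Even (Nat.card V) := by
  have := Fintype.ofFinite V
  rw [Nat.card_eq_fintype_card]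
  exact hM.isPerfectMatching_top.even_card

theorem even_ncard_of_induce_compl [Finite V] {s : Set V} {M' : Set (Sym2 ↥sᶜ)}
    (hM : IsPM G M) (hM' : IsPM (G.induce sᶜ) M') : Even s.ncard := by
  have hcard := Set.ncard_add_ncard_compl s
  rw [← Nat.card_coe_set_eq sᶜ] at hcard
  have := hM.even_card
  rw [← hcard] at this
  exact (Nat.even_add.mp this).mpr hM'.even_card

theorem matchable_induce (hM : IsPM G M) {U : Set V}
    (hU : ∀ v w, s(v, w) ∈ M → v ∈ U → w ∈ U) : Matchable (G.induce U) := by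
  rw [isPM_iff] at hM
  refine ⟨Sym2.map (↑) ⁻¹' M, isPM_iff.mpr ⟨fun e he => ?_, fun v => ?_⟩⟩
  · induction e with
    | h a b => exact hM.1 he
  · obtain ⟨w, hw, huniq⟩ := hM.2 v
    exact ⟨⟨w, hU _ _ hw v.2⟩, hw, fun x hx => Subtype.ext (huniq _ hx)⟩

theorem union_image_val {U : Set V} {M' : Set (Sym2 U)} {N : Set (Sym2 V)}
    (hM' : IsPM (G.induce U) M') (hN : N ⊆ G.edgeSet) (hNU : ∀ v w, s(v, w) ∈ N → v ∉ U)
    (hUN : ∀ v ∉ U, ∃! w, s(v, w) ∈ N) : IsPM G (Sym2.map (↑) '' M' ∪ N) := by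
  rw [isPM_iff] at hM' ⊢
  refine ⟨Set.union_subset ?_ hN, fun v => ?_⟩
  · rintro _ ⟨e, he, rfl⟩
    induction e with
    | h a b => exact hM'.1 he
  by_cases hv : v ∈ U
  · have hvN : ∀ w, s(v, w) ∉ N := fun w h => hNU v w h hv
    obtain ⟨w, hw, huniq⟩ := hM'.2 ⟨v, hv⟩
    refine ⟨w, Or.inl (Sym2.mk_mem_image_map_val_iff.mpr ⟨hv, w.2, hw⟩), fun x hx => ?_⟩
    obtain ⟨_, hx, hvx⟩ := Sym2.mk_mem_image_map_val_iff.mp (hx.resolve_right (hvN x))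
    exact congrArg Subtype.val (huniq ⟨x, hx⟩ hvx)
  · have hvM' : ∀ w, s(v, w) ∉ Sym2.map (↑) '' M' := fun w h =>
      hv (Sym2.mk_mem_image_map_val_iff.mp h).1
    simpa only [Set.mem_union, hvM', false_or] using hUN v hv

theorem symmDiff_edgeSet_s4 (hM : IsPM G M) {u : V} {C : G.Walk u u} (hC : C.IsCycle)
    (halt : ∀ v w, s(v, w) ∈ M → v ∈ C.support → s(v, w) ∈ C.edges) :
    IsPM G (symmDiff M C.edgeSet) := by
  rw [isPM_iff] at hM ⊢
  refine ⟨Set.symmDiff_subset_union.trans (Set.union_subset hM.1 C.edges_subset_edgeSet),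
    fun v => ?_⟩
  obtain ⟨m, hm, hmu⟩ := hM.2 v
  by_cases hv : v ∈ C.support
  · have hadj : C.toSubgraph.Adj v m := Walk.adj_toSubgraph_iff_mem_edges.mpr (halt v m hm hv)
    obtain ⟨z, ⟨hmz, hz⟩, hzu⟩ := hC.isCycles_spanningCoe_toSubgraph.existsUnique_ne_adj hadj
    refine ⟨z, Set.mem_symmDiff.mpr (Or.inr ⟨Walk.adj_toSubgraph_iff_mem_edges.mp hz,
      fun h => hmz (hmu z h).symm⟩), fun t ht => ?_⟩
    rcases Set.mem_symmDiff.mp ht with ⟨htM, htC⟩ | ⟨htC, htM⟩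
    · exact absurd (halt v t htM hv) htC
    · exact hzu t ⟨fun h => htM (h ▸ hm), Walk.adj_toSubgraph_iff_mem_edges.mpr htC⟩
  · have hvC : ∀ w, s(v, w) ∉ C.edgeSet := fun w h => hv (C.fst_mem_support_of_mem_edges h)
    simpa only [Set.mem_symmDiff, hvC, not_false_eq_true, and_true, false_and, or_false]
      using hM.2 v

theorem fromEdgeSet_symmDiff_adj (h₁ : IsPM G M₁) (h₂ : IsPM G M₂)
    {v w x : V} (hw : (fromEdgeSet (symmDiff M₁ M₂)).Adj v w) (hx : s(v, x) ∈ M₁) :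
    (fromEdgeSet (symmDiff M₁ M₂)).Adj v x := by
  rw [fromEdgeSet_adj] at hw ⊢
  refine ⟨?_, G.ne_of_adj (h₁.1 hx)⟩
  by_cases hwx : w = x
  · exact hwx ▸ hw.1
  rcases Set.mem_symmDiff.mp hw.1 with ⟨hw₁, -⟩ | ⟨hw₂, -⟩
  · exact absurd (h₁.eq_of_mk_mem_s4 hw₁ hx) hwx
  · exact Set.mem_symmDiff.mpr (Or.inl ⟨hx, fun hx₂ => hwx (h₂.eq_of_mk_mem_s4 hw₂ hx₂)⟩)

theorem exists_isConformalCycle_edgeSet_subset [Finite V] (h₁ : IsPM G M₁) (h₂ : IsPM G M₂)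
    (hne : M₁ ≠ M₂) :
    ∃ (a : V) (C : G.Walk a a), IsConformalCycle G C ∧ C.edgeSet ⊆ symmDiff M₁ M₂ := by
  set D := fromEdgeSet (symmDiff M₁ M₂)
  have hM : symmDiff M₁ M₂ ⊆ G.edgeSet :=
    Set.symmDiff_subset_union.trans (Set.union_subset h₁.1 h₂.1)
  have hDG : D ≤ G := (fromEdgeSet_le G).mpr fun e he => hM he.1
  have hD : D.IsCycles := by
    have := h₁.isPerfectMatching_top.symmDiff_isCycles h₂.isPerfectMatching_top
    rwa [Subgraph.spanningCoe_top, Subgraph.spanningCoe_top, ← fromEdgeSet_symmDiff] at this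
  obtain ⟨e, he⟩ : (symmDiff M₁ M₂).Nonempty :=
    Set.nonempty_iff_ne_empty.mpr (symmDiff_eq_bot.not.mpr hne)
  induction e with
  | h v w =>
  have hvw : D.Adj v w := (fromEdgeSet_adj _).mpr ⟨he, G.ne_of_adj (hM he)⟩
  obtain ⟨p, hp, hverts⟩ := hD.exists_cycle_toSubgraph_verts_eq_connectedComponentSupp
    (c := D.connectedComponentMk v) rfl ⟨w, hvw⟩
  refine ⟨v, p.mapLe hDG, ⟨hp.mapLe hDG, h₁.matchable_induce fun x y hxy hx => ?_⟩, ?_⟩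
  · -- a cycle vertex is `D`-adjacent to its `M₁`-partner, which is thus in the same component
    simp only [Set.mem_ofPred_eq, Walk.support_mapLe_eq_support] at hx ⊢
    rw [← Walk.mem_verts_toSubgraph, hverts] at hx ⊢
    intro hy
    obtain ⟨z, hz⟩ : (p.toSubgraph.neighborSet y).Nonempty := Set.nonempty_of_ncard_ne_zero <| by
      rw [hp.ncard_neighborSet_toSubgraph_eq_two (p.mem_verts_toSubgraph.mp (hverts ▸ hy))]
      norm_num
    have hyx : D.Adj y x := h₁.fromEdgeSet_symmDiff_adj h₂ hz.adj_sub (Sym2.eq_swap ▸ hxy)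
    exact hx ((ConnectedComponent.connectedComponentMk_eq_of_adj hyx).symm.trans hy)
  · rw [Walk.edgeSet_mapLe_eq_edgeSet]
    intro e he
    exact ((edgeSet_fromEdgeSet _) ▸ p.edges_subset_edgeSet he).1

end IsPM

theorem IsConformalCycle.exists_isPM_symmDiff_eq [Finite V] (hG : Matchable G) {a : V}
    {C : G.Walk a a} (hC : IsConformalCycle G C) :
    ∃ M₁ M₂, IsPM G M₁ ∧ IsPM G M₂ ∧ M₁ ≠ M₂ ∧ symmDiff M₁ M₂ = C.edgeSet := by
  obtain ⟨hcyc, M', hM'⟩ := hC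
  obtain ⟨M₀, hM₀⟩ := hG
  cases C with
  | nil => exact (Walk.not_isCycle_nil hcyc).elim
  | @cons _ b _ hab q =>
  have hq : q.IsPath := ((Walk.cons_isCycle_iff q hab).mp hcyc).1
  have hmem : ∀ v, v ∈ (Walk.cons hab q).support ↔ v ∈ q.support := fun v => by
    rw [Walk.support_cons, List.mem_cons, or_iff_right_of_imp fun h => h ▸ q.end_mem_support]
  have hodd : Odd q.length := by
    classical
    have := hM₀.even_ncard_of_induce_compl (s := {v | v ∈ (Walk.cons hab q).support}) hM'
    rw [show {v | v ∈ (Walk.cons hab q).support} = {v | v ∈ q.support} from Set.ext hmem,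
      ← List.coe_toFinset, Set.ncard_coe_finset,
      List.toFinset_card_of_nodup hq.support_nodup, Walk.length_support] at this
    simpa [Nat.even_add_one] using this
  obtain ⟨N, hNq, hN⟩ := hq.exists_perfectMatching_of_odd_length hodd
  have hM : IsPM G (Sym2.map (↑) '' M' ∪ N) := by
    refine hM'.union_image_val (hNq.trans fun e he => q.edges_subset_edgeSet he)
      (fun v w h hv => hv ((hmem v).mpr (q.fst_mem_support_of_mem_edges (hNq h))))
      fun v hv => hN v ((hmem v).mp (not_not.mp hv))
  refine ⟨_, _, hM, hM.symmDiff_edgeSet_s4 hcyc ?_, fun h => ?_, symmDiff_symmDiff_cancel_left _ _⟩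
  · rintro v w (h | h) hv
    · exact absurd hv (Sym2.mk_mem_image_map_val_iff.mp h).1
    · exact Walk.edges_cons hab q ▸ List.mem_cons_of_mem _ (hNq h)
  · have hab' : s(a, b) ∈ (Walk.cons hab q).edgeSet := by simp [Walk.edgeSet]
    rw [eq_comm, symmDiff_eq_left] at h
    rwa [h] at hab'

end

/-- Let `G` be a matchable graph and `S` a set of edges of `G`. Then `S` is a global
forcing set of `G` if and only if `S` contains at least one edge of every conformal
cycle of `G`. -/
theorem statement_4 {V : Type*} [Fintype V] (G : SimpleGraph V) (S : Set (Sym2 V))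
    (hG : Matchable G) (hS : S ⊆ G.edgeSet) :
    IsGlobalForcingSet G S ↔
      ∀ (a : V) (C : G.Walk a a), IsConformalCycle G C → ∃ e ∈ S, e ∈ C.edges := by
  constructor
  · rintro ⟨-, hforce⟩ a C hC
    obtain ⟨M₁, M₂, h₁, h₂, hne, hC⟩ := hC.exists_isPM_symmDiff_eq hG
    obtain ⟨e, heS, he⟩ := Set.inter_ne_inter_iff.mp (hforce M₁ M₂ h₁ h₂ hne)
    rw [hC] at he
    exact ⟨e, heS, he⟩
  · refine fun hhit => ⟨hS, fun M₁ M₂ h₁ h₂ hne => Set.inter_ne_inter_iff.mpr ?_⟩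
    obtain ⟨a, C, hC, hCM⟩ := h₁.exists_isConformalCycle_edgeSet_subset h₂ hne
    obtain ⟨e, heS, heC⟩ := hhit a C hC
    exact ⟨e, heS, hCM heC⟩
end

section
/- If G' is a bisubdivision of a matchable graph G, then Af(G') ≤ Af(G). -/
/-- `G'` is a bisubdivision of `G` on the edge set `S`: `G'` is obtained from `G` by
replacing each edge of `G` by a path of odd length between its endpoints whose internal
vertices are new, these paths being pairwise internally disjoint, where every edge not
in `S` is kept as a single edge (replaced by a path of length one). -/
def IsBisubdivisionOn {V V' : Type*} (G : SimpleGraph V) (S : Set (Sym2 V))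
    (G' : SimpleGraph V') : Prop :=
  ∃ (φ : V ↪ V') (P : ∀ ⦃u v : V⦄, G.Adj u v → G'.Walk (φ u) (φ v)),
    (∀ ⦃u v : V⦄ (h : G.Adj u v), (P h).IsPath) ∧
    (∀ ⦃u v : V⦄ (h : G.Adj u v), Odd (P h).length) ∧
    (∀ ⦃u v : V⦄ (h : G.Adj u v), s(u, v) ∉ S → (P h).length = 1) ∧
    (∀ ⦃u v : V⦄ (h : G.Adj u v), P h.symm = (P h).reverse) ∧
    (∀ ⦃u v a b : V⦄ (h : G.Adj u v) (h' : G.Adj a b), s(u, v) ≠ s(a, b) →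
      ∀ w, w ∈ (P h).support → w ∈ (P h').support → w = φ a ∨ w = φ b) ∧
    (∀ ⦃u v : V⦄ (h : G.Adj u v) (x : V), φ x ∈ (P h).support → x = u ∨ x = v) ∧
    (∀ w : V', (∃ (u v : V) (h : G.Adj u v), w ∈ (P h).support) ∨ ∃ x : V, w = φ x) ∧
    (∀ e ∈ G'.edgeSet, ∃ (u v : V) (h : G.Adj u v), e ∈ (P h).edges)

/-- `G'` is a bisubdivision of `G` (on some set of edges of `G`). -/
def IsBisubdivision {V V' : Type*} (G : SimpleGraph V) (G' : SimpleGraph V') : Prop :=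
  ∃ S ⊆ G.edgeSet, IsBisubdivisionOn G S G'

section PerfectMatching

variable {V : Type*} {G H : SimpleGraph V} {M N S : Set (Sym2 V)}

lemma IsPM.eq_of_subset (hN : IsPM G N) (hM : IsPM H M) (h : N ⊆ M) : N = M := by
  refine h.antisymm fun e he => ?_
  induction e using Sym2.ind with
  | _ a b =>
    obtain ⟨f, ⟨hfN, haf⟩, -⟩ := hN.2 a
    rwa [(hM.2 a).unique ⟨h hfN, haf⟩ ⟨he, Sym2.mem_mk_left a b⟩] at hfN

lemma isPM_deleteEdges_iff : IsPM (G.deleteEdges S) M ↔ IsPM G M ∧ Disjoint M S := by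
  simp only [IsPM, SimpleGraph.edgeSet_deleteEdges, Set.subset_sdiff]
  tauto

lemma isAntiForcingSet_edgeSet_diff (hM : IsPM G M) : IsAntiForcingSet G M (G.edgeSet \ M) := by
  have hdisj : Disjoint M (G.edgeSet \ M) := Set.disjoint_sdiff_right
  refine ⟨Set.sdiff_subset, Set.disjoint_iff_inter_eq_empty.1 hdisj.symm,
    isPM_deleteEdges_iff.2 ⟨hM, hdisj⟩, fun N hN => ?_⟩
  obtain ⟨hN, hNdisj⟩ := isPM_deleteEdges_iff.1 hN
  refine hN.eq_of_subset hM fun e he => ?_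
  by_contra heM
  exact Set.disjoint_left.1 hNdisj he ⟨hN.1 he, heM⟩

lemma exists_isAntiForcingSet_ncard_eq_af (hM : IsPM G M) :
    ∃ S, IsAntiForcingSet G M S ∧ S.ncard = af G M :=
  Nat.sInf_mem (s := {n | ∃ S, IsAntiForcingSet G M S ∧ S.ncard = n})
    ⟨_, _, isAntiForcingSet_edgeSet_diff hM, rfl⟩

lemma af_le_ncard (hS : IsAntiForcingSet G M S) : af G M ≤ S.ncard :=
  Nat.sInf_le ⟨S, hS, rfl⟩

lemma af_le_Af [Finite V] (hM : IsPM G M) : af G M ≤ Af G :=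
  le_csSup (s := {n | ∃ M, IsPM G M ∧ af G M = n})
    ((Set.finite_range (af G)).bddAbove.mono fun _ ⟨M, _, hM⟩ => Set.mem_range.2 ⟨M, hM⟩)
    ⟨M, hM, rfl⟩

end PerfectMatching

namespace SimpleGraph.Walk

variable {V : Type*} {G : SimpleGraph V} {N N₁ N₂ : Set (Sym2 V)} {u v w x y : V}

def Covers (p : G.Walk x y) (N : Set (Sym2 V)) (w : V) : Prop :=
  ∃ e ∈ N, e ∈ p.edges ∧ w ∈ e

def IsInteriorClosed (p : G.Walk x y) (N : Set (Sym2 V)) : Prop :=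
  ∀ w ∈ p.support, w ≠ x → w ≠ y → ∀ e ∈ N, w ∈ e → e ∈ p.edges

lemma covers_reverse (p : G.Walk x y) : p.reverse.Covers N w ↔ p.Covers N w := by
  simp only [Covers, edges_reverse, List.mem_reverse]

lemma covers_cons_start {h : G.Adj x v} {q : G.Walk v y} (hp : (cons h q).IsPath) :
    (cons h q).Covers N x ↔ s(x, v) ∈ N := by
  refine ⟨fun ⟨e, heN, he, hxe⟩ => ?_, fun hN => ⟨_, hN, List.mem_cons_self, Sym2.mem_mk_left x v⟩⟩
  rcases List.mem_cons.1 he with rfl | he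
  · exact heN
  · exact absurd (mem_support_of_mem_edges he hxe) ((cons_isPath_iff h q).1 hp).2

lemma covers_cons_of_ne {h : G.Adj x v} {q : G.Walk v y} (hwx : w ≠ x) (hwv : w ≠ v) :
    (cons h q).Covers N w ↔ q.Covers N w := by
  have : w ∉ s(x, v) := by simp [hwx, hwv]
  simp only [Covers, edges_cons, List.mem_cons]
  grind

lemma IsInteriorClosed.of_cons {h : G.Adj x v} {q : G.Walk v y} (hp : (cons h q).IsPath)
    (hi : (cons h q).IsInteriorClosed N) : q.IsInteriorClosed N := by
  intro w hw hwv hwy e heN hwe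
  have hwx : w ≠ x := by rintro rfl; exact ((cons_isPath_iff h q).1 hp).2 hw
  have := hi w (List.mem_cons_of_mem _ hw) hwx hwy e heN hwe
  rcases List.mem_cons.1 this with rfl | he
  · rcases Sym2.mem_iff.1 hwe with rfl | rfl <;> contradiction
  · exact he

lemma IsInteriorClosed.mem_iff_not_mem {h : G.Adj x v} {h' : G.Adj v u} {q : G.Walk u y}
    (hN : IsPM G N) (hp : (cons h (cons h' q)).IsPath)
    (hi : (cons h (cons h' q)).IsInteriorClosed N) : s(x, v) ∈ N ↔ s(v, u) ∉ N := by
  simp only [cons_isPath_iff, support_cons, List.mem_cons, not_or] at hp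
  obtain ⟨⟨-, hvq⟩, ⟨hxv, hxq⟩⟩ := hp
  have hvy : v ≠ y := by rintro rfl; exact hvq q.end_mem_support
  have hxu : x ≠ u := by rintro rfl; exact hxq q.start_mem_support
  obtain ⟨e, ⟨heN, hve⟩, he⟩ := hN.2 v
  have hmem := hi v (by simp) (Ne.symm hxv) hvy e heN hve
  simp only [edges_cons, List.mem_cons] at hmem
  have hne : s(x, v) ≠ s(v, u) := by simp [hxv, hxu]
  rcases hmem with rfl | rfl | hmem
  · exact ⟨fun _ hvu => hne (he _ ⟨hvu, by simp⟩).symm, fun _ => heN⟩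
  · exact ⟨fun hxv' _ => hne (he _ ⟨hxv', by simp⟩), absurd heN⟩
  · exact absurd (mem_support_of_mem_edges hmem hve) hvq

lemma IsInteriorClosed.covers_cons_start_iff {x v y : V} {h : G.Adj x v} {q : G.Walk v y}
    (hN : IsPM G N) (hp : (cons h q).IsPath) (hi : (cons h q).IsInteriorClosed N) :
    (cons h q).Covers N x ↔ ((cons h q).Covers N y ↔ Odd (cons h q).length) := by
  cases q with
  | nil =>
    simp only [Covers, edges_cons, edges_nil, List.mem_singleton, length_cons, length_nil]
    grind
  | cons h' q =>
    have hp' : (cons h' q).IsPath := hp.of_cons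
    have hyx : y ≠ x := by
      rintro rfl; exact ((cons_isPath_iff h _).1 hp).2 (cons h' q).end_mem_support
    have hyv : y ≠ v := by rintro rfl; exact ((cons_isPath_iff h' q).1 hp').2 q.end_mem_support
    have ih := (hi.of_cons hp).covers_cons_start_iff hN hp'
    rw [covers_cons_start hp', ← not_iff_not, ← hi.mem_iff_not_mem hN hp] at ih
    rw [covers_cons_start hp, covers_cons_of_ne hyx hyv, length_cons, Nat.odd_add_one, ih]
    tauto

lemma IsInteriorClosed.covers_start_iff_end {p : G.Walk x y} (hN : IsPM G N) (hp : p.IsPath)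
    (hodd : Odd p.length) (hi : p.IsInteriorClosed N) : p.Covers N x ↔ p.Covers N y := by
  cases p with
  | nil => simp at hodd
  | cons h q => simpa only [hodd, iff_true] using hi.covers_cons_start_iff hN hp

lemma IsInteriorClosed.mem_iff_of_covers_start_iff {p : G.Walk x y} (hN₁ : IsPM G N₁)
    (hN₂ : IsPM G N₂) (hp : p.IsPath) (hi₁ : p.IsInteriorClosed N₁)
    (hi₂ : p.IsInteriorClosed N₂) (hx : p.Covers N₁ x ↔ p.Covers N₂ x) :
    ∀ e ∈ p.edges, e ∈ N₁ ↔ e ∈ N₂ := by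
  induction p with
  | nil => simp
  | @cons x v y h q ih =>
    rw [covers_cons_start hp, covers_cons_start hp] at hx
    intro e he
    rcases List.mem_cons.1 he with rfl | he
    · exact hx
    refine ih hp.of_cons (hi₁.of_cons hp) (hi₂.of_cons hp) ?_ e he
    cases q with
    | nil => simp [Covers]
    | cons h' q =>
      rw [covers_cons_start hp.of_cons, covers_cons_start hp.of_cons]
      have h₁ := hi₁.mem_iff_not_mem hN₁ hp
      have h₂ := hi₂.mem_iff_not_mem hN₂ hp
      tauto

lemma IsPath.exists_edge_covers_start_iff {p : G.Walk x y} (hp : p.IsPath) (h0 : 0 < p.length) :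
    ∃ e ∈ p.edges, ∀ N, p.Covers N x ↔ e ∈ N := by
  cases p with
  | nil => simp at h0
  | cons h q => exact ⟨_, List.mem_cons_self, fun N => covers_cons_start hp⟩

end SimpleGraph.Walk

open SimpleGraph

structure OddSubdivision {V V' : Type*} (G : SimpleGraph V) (G' : SimpleGraph V') where
  embed : V ↪ V'
  path : ∀ ⦃u v : V⦄, G.Adj u v → G'.Walk (embed u) (embed v)
  isPath : ∀ ⦃u v : V⦄ (h : G.Adj u v), (path h).IsPath
  odd_length : ∀ ⦃u v : V⦄ (h : G.Adj u v), Odd (path h).length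
  path_symm : ∀ ⦃u v : V⦄ (h : G.Adj u v), path h.symm = (path h).reverse
  support_inter : ∀ ⦃u v a b : V⦄ (h : G.Adj u v) (h' : G.Adj a b), s(u, v) ≠ s(a, b) →
    ∀ w ∈ (path h).support, w ∈ (path h').support → w = embed a ∨ w = embed b
  embed_mem_support : ∀ ⦃u v : V⦄ (h : G.Adj u v) (x : V),
    embed x ∈ (path h).support → x = u ∨ x = v
  exists_mem_edges : ∀ e ∈ G'.edgeSet, ∃ (u v : V) (h : G.Adj u v), e ∈ (path h).edges

lemma IsBisubdivisionOn.nonempty_oddSubdivision {V V' : Type*} {G : SimpleGraph V}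
    {S : Set (Sym2 V)} {G' : SimpleGraph V'} (h : IsBisubdivisionOn G S G') :
    Nonempty (OddSubdivision G G') :=
  let ⟨φ, P, hpath, hodd, _, hsymm, hinter, hsupp, _, hedges⟩ := h
  ⟨⟨φ, P, hpath, hodd, hsymm, hinter, hsupp, hedges⟩⟩

namespace OddSubdivision

variable {V V' : Type*} {G : SimpleGraph V} {G' : SimpleGraph V'} (D : OddSubdivision G G')
  {N A B : Set (Sym2 V')} {u v a b : V}

lemma mem_edges_path_iff (h : G.Adj u v) (h' : G.Adj a b) (huv : s(u, v) = s(a, b))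
    {e : Sym2 V'} : e ∈ (D.path h).edges ↔ e ∈ (D.path h').edges := by
  rcases Sym2.eq_iff.1 huv with ⟨rfl, rfl⟩ | ⟨rfl, rfl⟩
  · rfl
  · rw [show D.path h = D.path h'.symm from rfl, D.path_symm h', Walk.edges_reverse,
      List.mem_reverse]

lemma eq_of_mem_edges_path (h : G.Adj u v) (h' : G.Adj a b) {e : Sym2 V'}
    (he : e ∈ (D.path h).edges) (he' : e ∈ (D.path h').edges) : s(u, v) = s(a, b) := by
  by_contra hne
  have ends : ∀ ⦃u v a b : V⦄ (h : G.Adj u v) (h' : G.Adj a b), s(u, v) ≠ s(a, b) →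
      e ∈ (D.path h).edges → e ∈ (D.path h').edges → ∀ w ∈ e, w ∈ s(D.embed a, D.embed b) :=
    fun _ _ _ _ h h' hne he he' w hw => Sym2.mem_iff.2 <| D.support_inter h h' hne w
      (Walk.mem_support_of_mem_edges he hw) (Walk.mem_support_of_mem_edges he' hw)
  induction e using Sym2.ind with
  | _ c d =>
  have hcd : c ≠ d := (Walk.edges_subset_edgeSet _ he : G'.Adj c d).ne
  have hab := ends h h' hne he he'
  have huv := ends h' h (Ne.symm hne) he' he
  have := Sym2.eq_of_ne_mem hcd (huv c (by simp)) (huv d (by simp)) (hab c (by simp))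
    (hab d (by simp))
  exact hne (Sym2.map.injective D.embed.injective (by simpa using this))

lemma isInteriorClosed (hN : N ⊆ G'.edgeSet) (h : G.Adj u v) :
    (D.path h).IsInteriorClosed N := by
  intro w hw hwu hwv e heN hwe
  obtain ⟨a, b, h', he⟩ := D.exists_mem_edges e (hN heN)
  by_cases huv : s(u, v) = s(a, b)
  · exact (D.mem_edges_path_iff h h' huv).2 he
  · rcases D.support_inter h h' huv w hw (Walk.mem_support_of_mem_edges he hwe) with rfl | rfl
    · rcases D.embed_mem_support h a hw with rfl | rfl <;> contradiction
    · rcases D.embed_mem_support h b hw with rfl | rfl <;> contradiction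

def contract (N : Set (Sym2 V')) : Set (Sym2 V) :=
  {e | ∃ u v, ∃ h : G.Adj u v, e = s(u, v) ∧ (D.path h).Covers N (D.embed u)}

lemma mem_contract_iff (hN : IsPM G' N) (h : G.Adj u v) :
    s(u, v) ∈ D.contract N ↔ (D.path h).Covers N (D.embed u) := by
  refine ⟨fun ⟨a, b, h', huv, hcov⟩ => ?_, fun hcov => ⟨u, v, h, rfl, hcov⟩⟩
  rcases Sym2.eq_iff.1 huv with ⟨rfl, rfl⟩ | ⟨rfl, rfl⟩
  · exact hcov
  · rw [show D.path h = D.path h'.symm from rfl, D.path_symm h', Walk.covers_reverse]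
    exact ((D.isInteriorClosed hN.1 h').covers_start_iff_end hN (D.isPath h')
      (D.odd_length h')).1 hcov

lemma contract_subset_edgeSet : D.contract N ⊆ G.edgeSet :=
  fun _ ⟨_, _, h, he, _⟩ => he ▸ h

lemma isPM_contract (hN : IsPM G' N) : IsPM G (D.contract N) := by
  refine ⟨D.contract_subset_edgeSet, fun w => ?_⟩
  obtain ⟨e, ⟨heN, hwe⟩, he_unique⟩ := hN.2 (D.embed w)
  have mem_edges : ∀ x (hx : G.Adj w x), s(w, x) ∈ D.contract N → e ∈ (D.path hx).edges := by
    intro x hx hmem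
    obtain ⟨f, hfN, hf, hwf⟩ := (D.mem_contract_iff hN hx).1 hmem
    rwa [he_unique f ⟨hfN, hwf⟩] at hf
  obtain ⟨u, v, h, he⟩ := D.exists_mem_edges e (hN.1 heN)
  have hcov : (D.path h).Covers N (D.embed w) := ⟨e, heN, he, hwe⟩
  obtain ⟨x, hx, hmem⟩ : ∃ x, ∃ hx : G.Adj w x, s(w, x) ∈ D.contract N := by
    rcases D.embed_mem_support h w (Walk.mem_support_of_mem_edges he hwe) with rfl | rfl
    · exact ⟨v, h, _, _, h, rfl, hcov⟩
    · refine ⟨u, h.symm, (D.mem_contract_iff hN h.symm).2 ?_⟩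
      rwa [D.path_symm, Walk.covers_reverse]
  refine ⟨s(w, x), ⟨hmem, Sym2.mem_mk_left w x⟩, fun f ⟨hf, hwf⟩ => ?_⟩
  obtain ⟨y, rfl⟩ := Sym2.mem_iff_exists.1 hwf
  have hy : G.Adj w y := D.contract_subset_edgeSet hf
  exact D.eq_of_mem_edges_path hy hx (mem_edges y hy hf) (mem_edges x hx hmem)

lemma eq_of_contract_eq (hA : IsPM G' A) (hB : IsPM G' B)
    (hAB : D.contract A = D.contract B) : A = B := by
  ext e
  by_cases he : e ∈ G'.edgeSet
  · obtain ⟨u, v, h, he⟩ := D.exists_mem_edges e he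
    refine (D.isInteriorClosed hA.1 h).mem_iff_of_covers_start_iff hA hB (D.isPath h)
      (D.isInteriorClosed hB.1 h) ?_ e he
    rw [← D.mem_contract_iff hA h, ← D.mem_contract_iff hB h, hAB]
  · exact iff_of_false (fun heA => he (hA.1 heA)) (fun heB => he (hB.1 heB))

lemma exists_edge_mem_iff_mem_contract (h : G.Adj u v) :
    ∃ e ∈ G'.edgeSet, ∀ N, IsPM G' N → (e ∈ N ↔ s(u, v) ∈ D.contract N) := by
  obtain ⟨e, he, hcov⟩ :=
    (D.isPath h).exists_edge_covers_start_iff (D.odd_length h).pos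
  exact ⟨e, Walk.edges_subset_edgeSet _ he, fun N hN => by rw [D.mem_contract_iff hN h, hcov]⟩

lemma exists_isAntiForcingSet_ncard_le {M : Set (Sym2 V')} (hM : IsPM G' M)
    {S : Set (Sym2 V)} (hS : IsAntiForcingSet G (D.contract M) S) (hfin : S.Finite) :
    ∃ S', IsAntiForcingSet G' M S' ∧ S'.ncard ≤ S.ncard := by
  have : ∀ e : S, ∃ e' ∈ G'.edgeSet, ∀ N, IsPM G' N → (e' ∈ N ↔ e.1 ∈ D.contract N) := by
    rintro ⟨e, he⟩
    induction e using Sym2.ind with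
    | _ u v => exact D.exists_edge_mem_iff_mem_contract (hS.1 he)
  choose f hfE hf using this
  have hdisj : Disjoint (Set.range f) M := by
    rw [Set.disjoint_left]
    rintro _ ⟨e, rfl⟩ hfM
    have : e.1 ∈ S ∩ D.contract M := ⟨e.2, (hf e M hM).1 hfM⟩
    rwa [hS.2.1] at this
  have : Finite S := hfin.to_subtype
  refine ⟨Set.range f, ⟨?_, Set.disjoint_iff_inter_eq_empty.1 hdisj,
    isPM_deleteEdges_iff.2 ⟨hM, hdisj.symm⟩, fun N hN => ?_⟩, ?_⟩
  · rintro _ ⟨e, rfl⟩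
    exact hfE e
  · obtain ⟨hN, hNS⟩ := isPM_deleteEdges_iff.1 hN
    refine D.eq_of_contract_eq hN hM
      (hS.2.2.2 _ (isPM_deleteEdges_iff.2 ⟨D.isPM_contract hN, ?_⟩))
    rw [Set.disjoint_right]
    exact fun e heS heN => Set.disjoint_left.1 hNS ((hf ⟨e, heS⟩ N hN).2 heN) ⟨⟨e, heS⟩, rfl⟩
  · rw [← Nat.card_coe_set_eq, ← Nat.card_coe_set_eq]
    exact Finite.card_range_le f

lemma af_le_af_contract [Finite V] {M : Set (Sym2 V')} (hM : IsPM G' M) :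
    af G' M ≤ af G (D.contract M) := by
  obtain ⟨S, hS, hcard⟩ := exists_isAntiForcingSet_ncard_eq_af (D.isPM_contract hM)
  obtain ⟨S', hS', hle⟩ := D.exists_isAntiForcingSet_ncard_le hM hS S.toFinite
  exact (af_le_ncard hS').trans (hcard ▸ hle)

lemma Af_le [Finite V] (D : OddSubdivision G G') : Af G' ≤ Af G :=
  csSup_le' fun _ ⟨_, hM, hn⟩ =>
    hn ▸ (D.af_le_af_contract hM).trans (af_le_Af (D.isPM_contract hM))

end OddSubdivision

theorem statement_6_general {V V' : Type*} [Fintype V]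
    (G : SimpleGraph V) (G' : SimpleGraph V')
    (h : IsBisubdivision G G') :
    Af G' ≤ Af G := by
  obtain ⟨S, -, hS⟩ := h
  obtain ⟨D⟩ := hS.nonempty_oddSubdivision
  exact D.Af_le

/-- If `G'` is a bisubdivision of a matchable graph `G`, then `Af(G') ≤ Af(G)`. -/
theorem statement_6 {V V' : Type*} [Fintype V] [Fintype V']
    (G : SimpleGraph V) (G' : SimpleGraph V') (hG : Matchable G)
    (h : IsBisubdivision G G') :
    Af G' ≤ Af G :=
  statement_6_general G G' h
end

section
/- Let M be a perfect matching of a graph G with af(G,M) = Af(G), and let e be an edge of G not in M. If G' is a bisubdivision of G on the single edge e, then Af(G') = Af(G). -/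
/-! ### Auxiliary development -/

open SimpleGraph

namespace Bisub

variable {V V' : Type*} {G : SimpleGraph V} {G' : SimpleGraph V'}

lemma edge_getVert_mem {u v : V} (p : G.Walk u v) {i : ℕ} (hi : i < p.length) :
    s(p.getVert i, p.getVert (i+1)) ∈ p.edges := by
  induction p generalizing i with
  | nil => simp at hi
  | cons h q ih =>
    cases i with
    | zero => simp [Walk.getVert_zero, Walk.getVert_cons_succ, Walk.edges_cons]
    | succ i =>
      simp only [Walk.getVert_cons_succ, Walk.edges_cons, List.mem_cons]
      exact Or.inr (ih (by simpa [Walk.length_cons, Nat.succ_lt_succ_iff] using hi))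

lemma edges_exists_getVert {u v : V} (p : G.Walk u v) {f} (hf : f ∈ p.edges) :
    ∃ i < p.length, f = s(p.getVert i, p.getVert (i+1)) := by
  induction p with
  | nil => simp at hf
  | cons h q ih =>
    rw [Walk.edges_cons, List.mem_cons] at hf
    rcases hf with rfl | hf
    · exact ⟨0, by simp [Walk.length_cons], by simp [Walk.getVert_zero, Walk.getVert_cons_succ]⟩
    · obtain ⟨i, hi, rfl⟩ := ih hf
      exact ⟨i + 1, by simp [Walk.length_cons]; omega, by simp [Walk.getVert_cons_succ]⟩

lemma getVert_injOn {u v : V} {p : G.Walk u v} (hp : p.IsPath) :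
    ∀ i ≤ p.length, ∀ j ≤ p.length, p.getVert i = p.getVert j → i = j := by
  induction p with
  | nil => intro i hi j hj _; simp at hi hj; omega
  | cons h q ih =>
    rw [Walk.cons_isPath_iff] at hp
    intro i hi j hj hij
    match i, j with
    | 0, 0 => rfl
    | 0, j + 1 =>
      exfalso
      rw [Walk.getVert_zero, Walk.getVert_cons_succ] at hij
      exact hp.2 (Walk.mem_support_iff_exists_getVert.2
        ⟨j, hij.symm, by simpa [Walk.length_cons] using hj⟩)
    | i + 1, 0 =>
      exfalso
      rw [Walk.getVert_zero, Walk.getVert_cons_succ] at hij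
      exact hp.2 (Walk.mem_support_iff_exists_getVert.2
        ⟨i, hij, by simpa [Walk.length_cons] using hi⟩)
    | i + 1, j + 1 =>
      rw [Walk.getVert_cons_succ, Walk.getVert_cons_succ] at hij
      have := ih hp.1 i (by simpa [Walk.length_cons] using hi)
        j (by simpa [Walk.length_cons] using hj) hij
      omega

/-- All the structure we need from a bisubdivision on a single edge `s(u0,v0)`. -/
structure Setup (G : SimpleGraph V) (G' : SimpleGraph V') (u0 v0 : V) (φ : V ↪ V') : Type _ where
  hadj : G.Adj u0 v0
  p : G'.Walk (φ u0) (φ v0)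
  hpath : p.IsPath
  hodd : Odd p.length
  himg : ∀ ⦃x y : V⦄, G.Adj x y → s(x,y) ≠ s(u0,v0) → G'.Adj (φ x) (φ y)
  hedge : ∀ f ∈ G'.edgeSet,
    (∃ x y, G.Adj x y ∧ s(x,y) ≠ s(u0,v0) ∧ f = s(φ x, φ y)) ∨ f ∈ p.edges
  hsupp : ∀ x : V, φ x ∈ p.support → x = u0 ∨ x = v0
  hvert : ∀ w : V', (∃ x, w = φ x) ∨ w ∈ p.support

lemma setup_of_bisub {e : Sym2 V} (he : e ∈ G.edgeSet)
    (h : IsBisubdivisionOn G {e} G') :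
    ∃ (u0 v0 : V) (φ : V ↪ V'), e = s(u0, v0) ∧ Nonempty (Setup G G' u0 v0 φ) := by
  induction e with
  | h u0 v0 =>
  rw [SimpleGraph.mem_edgeSet] at he
  obtain ⟨φ, P, hpath, hodd, hlen1, hrev, _hdisj, hsupp, hvert, hedge⟩ := h
  refine ⟨u0, v0, φ, rfl, ⟨?_⟩⟩
  have key : ∀ ⦃x y : V⦄ (hxy : G.Adj x y), s(x,y) = s(u0,v0) →
      (∀ f, f ∈ (P hxy).edges ↔ f ∈ (P he).edges) ∧
      (∀ w, w ∈ (P hxy).support ↔ w ∈ (P he).support) := by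
    intro x y hxy hexy
    rcases Sym2.eq_iff.1 hexy with ⟨rfl, rfl⟩ | ⟨rfl, rfl⟩
    · constructor <;> intro f <;> rfl
    · have h1 : P hxy = (P he).reverse := hrev he
      constructor <;> intro f <;> rw [h1] <;> simp
  refine ⟨he, P he, hpath he, hodd he, ?_, ?_, fun x hx => hsupp he x hx, ?_⟩
  · intro x y hxy hne
    have hl := hlen1 hxy (by simpa using hne)
    exact (P hxy).adj_of_length_eq_one hl
  · intro f hf
    obtain ⟨x, y, hxy, hfe⟩ := hedge f hf
    by_cases hne : s(x,y) = s(u0,v0)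
    · exact Or.inr (((key hxy hne).1 f).1 hfe)
    · left
      refine ⟨x, y, hxy, hne, ?_⟩
      have hl := hlen1 hxy (by simpa using hne)
      obtain ⟨i, hi, rfl⟩ := edges_exists_getVert _ hfe
      rw [hl] at hi
      interval_cases i
      simp [Walk.getVert_zero, ← hl, Walk.getVert_length]
  · intro w
    rcases hvert w with ⟨x, y, hxy, hw⟩ | ⟨x, rfl⟩
    · by_cases hne : s(x,y) = s(u0,v0)
      · exact Or.inr (((key hxy hne).2 w).1 hw)
      · have hl := hlen1 hxy (by simpa using hne)
        rw [Walk.mem_support_iff_exists_getVert] at hw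
        obtain ⟨i, rfl, hi⟩ := hw
        rw [hl] at hi
        interval_cases i
        · exact Or.inl ⟨x, by simp [Walk.getVert_zero]⟩
        · exact Or.inl ⟨y, by simp [← hl, Walk.getVert_length]⟩
    · exact Or.inl ⟨x, rfl⟩

lemma mem_map_iff {φ : V ↪ V'} {a : V} {g : Sym2 V} :
    φ a ∈ Sym2.map φ g ↔ a ∈ g := by
  rw [Sym2.mem_map]
  constructor
  · rintro ⟨b, hb, hba⟩
    rwa [← φ.injective hba]
  · exact fun ha => ⟨a, ha, rfl⟩

lemma isPM_deleteEdges_iff {T N : Set (Sym2 V)} :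
    IsPM (G.deleteEdges T) N ↔ IsPM G N ∧ N ∩ T = ∅ := by
  unfold IsPM
  rw [SimpleGraph.edgeSet_deleteEdges, Set.subset_diff,
    ← Set.disjoint_iff_inter_eq_empty]
  tauto

lemma cover_subset_eq {N K : Set (Sym2 V)}
    (hN : ∀ w : V, ∃! e, e ∈ N ∧ w ∈ e) (hK : ∀ w : V, ∃! e, e ∈ K ∧ w ∈ e)
    (hsub : K ⊆ N) : K = N := by
  apply Set.Subset.antisymm hsub
  intro f hf
  induction f with
  | h a b =>
    obtain ⟨g, ⟨hgK, hga⟩, _⟩ := hK a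
    have : g = s(a,b) := (hN a).unique ⟨hsub hgK, hga⟩ ⟨hf, by simp⟩
    rwa [← this]

lemma exists_antiforcing {N : Set (Sym2 V)} (hN : IsPM G N) :
    IsAntiForcingSet G N (G.edgeSet \ N) := by
  refine ⟨Set.diff_subset, by simp [Set.diff_inter_self], ?_, ?_⟩
  · rw [isPM_deleteEdges_iff]
    refine ⟨hN, ?_⟩
    ext f
    simp only [Set.mem_inter_iff, Set.mem_diff, Set.mem_empty_iff_false, iff_false]
    tauto
  · intro K hK
    rw [isPM_deleteEdges_iff] at hK
    obtain ⟨hKpm, hKd⟩ := hK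
    have hsub : K ⊆ N := by
      intro f hf
      by_contra hfN
      exact Set.eq_empty_iff_forall_notMem.1 hKd f ⟨hf, hKpm.1 hf, hfN⟩
    exact cover_subset_eq hN.2 hKpm.2 hsub

lemma af_spec {N : Set (Sym2 V)} (hN : IsPM G N) :
    ∃ T, IsAntiForcingSet G N T ∧ T.ncard = af G N :=
  Nat.sInf_mem (⟨(G.edgeSet \ N).ncard, _, exists_antiforcing hN, rfl⟩ :
    {n | ∃ S, IsAntiForcingSet G N S ∧ S.ncard = n}.Nonempty)

lemma af_le {N T : Set (Sym2 V)} (hT : IsAntiForcingSet G N T) : af G N ≤ T.ncard :=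
  Nat.sInf_le ⟨T, hT, rfl⟩

lemma af_le_Af [Fintype V] {N : Set (Sym2 V)} (hN : IsPM G N) : af G N ≤ Af G := by
  classical
  apply le_csSup
  · have : {n | ∃ M, IsPM G M ∧ af G M = n} ⊆ af G '' Set.univ := by
      rintro n ⟨M, _, rfl⟩
      exact ⟨M, Set.mem_univ _, rfl⟩
    exact ((Set.finite_univ.image (af G)).subset this).bddAbove
  · exact ⟨N, hN, rfl⟩

lemma Af_le [Fintype V] {b : ℕ} (hne : ∃ N, IsPM G N)
    (hb : ∀ N, IsPM G N → af G N ≤ b) : Af G ≤ b := by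
  obtain ⟨N₀, h₀⟩ := hne
  have hmem : af G N₀ ∈ {n | ∃ M, IsPM G M ∧ af G M = n} := ⟨N₀, h₀, rfl⟩
  apply csSup_le ⟨_, hmem⟩
  rintro n ⟨N, hN, rfl⟩
  exact hb N hN


namespace Setup
variable {u0 v0 : V} {φ : V ↪ V'} (S : Setup G G' u0 v0 φ)

def E (i : ℕ) : Sym2 V' := s(S.p.getVert i, S.p.getVert (i+1))

lemma npos : 1 ≤ S.p.length := S.hodd.pos

lemma inj {i j : ℕ} (hi : i ≤ S.p.length) (hj : j ≤ S.p.length)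
    (hij : S.p.getVert i = S.p.getVert j) : i = j :=
  getVert_injOn S.hpath i hi j hj hij

lemma E_mem_edgeSet {i : ℕ} (hi : i < S.p.length) : S.E i ∈ G'.edgeSet :=
  (SimpleGraph.mem_edgeSet _).2 (S.p.adj_getVert_succ hi)

lemma E_mem_edges {i : ℕ} (hi : i < S.p.length) : S.E i ∈ S.p.edges :=
  edge_getVert_mem _ hi

lemma mem_E_iff {i j : ℕ} (hi : i < S.p.length) (hj : j ≤ S.p.length) :
    S.p.getVert j ∈ S.E i ↔ j = i ∨ j = i + 1 := by
  rw [E, Sym2.mem_iff]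
  constructor
  · rintro (h | h)
    · exact Or.inl (S.inj hj (by omega) h)
    · exact Or.inr (S.inj hj (by omega) h)
  · rintro (rfl | rfl) <;> simp

lemma E_inj {i j : ℕ} (hi : i < S.p.length) (hj : j < S.p.length)
    (h : S.E i = S.E j) : i = j := by
  rw [E, E, Sym2.eq_iff] at h
  rcases h with ⟨h1, _⟩ | ⟨h1, h2⟩
  · exact S.inj (by omega) (by omega) h1
  · have := S.inj (i := i) (j := j+1) (by omega) (by omega) h1
    have := S.inj (i := i+1) (j := j) (by omega) (by omega) h2
    omega

lemma internal_not_img {i : ℕ} (hi1 : 1 ≤ i) (hi2 : i < S.p.length) (x : V) :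
    S.p.getVert i ≠ φ x := by
  intro hx
  have hmem : φ x ∈ S.p.support :=
    Walk.mem_support_iff_exists_getVert.2 ⟨i, hx, by omega⟩
  rcases S.hsupp x hmem with rfl | rfl
  · have : S.p.getVert i = S.p.getVert 0 := by rw [hx, Walk.getVert_zero]
    have := S.inj (by omega) (by omega) this; omega
  · have : S.p.getVert i = S.p.getVert S.p.length := by rw [hx, Walk.getVert_length]
    have := S.inj (by omega) (le_refl _) this; omega

lemma internal_edges {i : ℕ} (hi1 : 1 ≤ i) (hi2 : i < S.p.length) {f : Sym2 V'}
    (hf : f ∈ G'.edgeSet) (hw : S.p.getVert i ∈ f) : ∃ j < S.p.length, f = S.E j := by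
  rcases S.hedge f hf with ⟨x, y, hxy, hne, rfl⟩ | hp
  · rcases Sym2.mem_iff.1 hw with h | h
    · exact absurd h (S.internal_not_img hi1 hi2 x)
    · exact absurd h (S.internal_not_img hi1 hi2 y)
  · exact edges_exists_getVert _ hp

/-- A path edge is never the `φ`-image of a non-`e` edge of `G`. -/
lemma E_ne_img {i : ℕ} (hi : i < S.p.length) {x y : V} (hxy : G.Adj x y)
    (hne : s(x,y) ≠ s(u0,v0)) : S.E i ≠ s(φ x, φ y) := by
  intro hE
  rcases Nat.lt_or_ge S.p.length 2 with h2 | h2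
  · -- length = 1, so i = 0 and E 0 = s(φ u0, φ v0)
    have hl : S.p.length = 1 := by have := S.npos; omega
    have hi0 : i = 0 := by omega
    subst hi0
    have hgv : S.p.getVert (0+1) = φ v0 := by
      have h' := S.p.getVert_length
      rwa [hl] at h'
    rw [E, Walk.getVert_zero, hgv] at hE
    have : s(u0, v0) = s(x, y) := by
      have := Sym2.map.injective φ.injective (a₁ := s(u0,v0)) (a₂ := s(x,y))
      simp only [Sym2.map_pair_eq] at this
      exact this hE
    exact hne this.symm
  · -- some endpoint of E i is internal
    rcases Nat.lt_or_ge 0 i with h0 | h0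
    · have := S.internal_not_img (by omega) hi (x := x)
      have hmem : S.p.getVert i ∈ S.E i := by simp [E]
      rw [hE, Sym2.mem_iff] at hmem
      rcases hmem with h | h
      · exact S.internal_not_img (by omega) hi x h
      · exact S.internal_not_img (by omega) hi y h
    · have h0 : i = 0 := by omega
      subst h0
      have hmem : S.p.getVert 1 ∈ S.E 0 := by simp [E]
      rw [hE, Sym2.mem_iff] at hmem
      rcases hmem with h | h
      · exact S.internal_not_img (by omega) (by omega) x h
      · exact S.internal_not_img (by omega) (by omega) y h

/-- Path-alternation: in a perfect matching of `G'`, the matched path edges are exactly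
those of one parity, determined by whether `E 0` is matched. -/
lemma alternation {N' : Set (Sym2 V')} (hN' : IsPM G' N') :
    ∀ i < S.p.length, (S.E i ∈ N' ↔ (Even i ↔ S.E 0 ∈ N')) := by
  intro i
  induction i with
  | zero => simp
  | succ i ih =>
    intro hi
    have hi' : i < S.p.length := by omega
    -- the internal vertex getVert (i+1) is matched by a unique edge, a path edge E i or E (i+1)
    obtain ⟨f, ⟨hfN, hfv⟩, hfu⟩ := hN'.2 (S.p.getVert (i+1))
    obtain ⟨j, hj, rfl⟩ := S.internal_edges (by omega) (by omega) (hN'.1 hfN) hfv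
    have hij : i + 1 = j ∨ i + 1 = j + 1 := (S.mem_E_iff hj (by omega)).1 hfv
    have key : S.E (i+1) ∈ N' ↔ S.E i ∉ N' := by
      constructor
      · intro h1 h2
        have e1 : S.E (i+1) = S.E j := hfu _ ⟨h1, by rw [S.mem_E_iff hi (by omega)]; tauto⟩
        have e2 : S.E i = S.E j := hfu _ ⟨h2, by rw [S.mem_E_iff hi' (by omega)]; tauto⟩
        have := S.E_inj hi hi' (e1.trans e2.symm)
        omega
      · intro h2
        rcases hij with rfl | h
        · exact hfN
        · have : j = i := by omega
          subst this
          exact absurd hfN h2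
    rw [key, ih hi']
    rcases Nat.even_or_odd i with he | ho
    · have : ¬ Even (i+1) := by simp [Nat.even_add_one, he]
      tauto
    · have : Even (i+1) := by simpa [Nat.even_add_one] using ho
      have : ¬ Even i := by simpa using ho
      tauto

lemma E_last (hn : 1 ≤ S.p.length) {N' : Set (Sym2 V')} (hN' : IsPM G' N') :
    (S.E (S.p.length - 1) ∈ N' ↔ S.E 0 ∈ N') := by
  have := S.alternation hN' (S.p.length - 1) (by omega)
  have hev : Even (S.p.length - 1) := by
    obtain ⟨k, hk⟩ := S.hodd
    have : S.p.length - 1 = 2 * k := by omega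
    exact ⟨k, by omega⟩
  tauto

/-- Project a matching of `G'` down to a matching of `G`. -/
def down (N' : Set (Sym2 V')) : Set (Sym2 V) :=
  {f | f ∈ G.edgeSet ∧
    ((f = s(u0,v0) ∧ S.E 0 ∈ N') ∨ (f ≠ s(u0,v0) ∧ Sym2.map φ f ∈ N'))}

/-- Lift a matching of `G` up to a matching of `G'`. -/
def up (N : Set (Sym2 V)) : Set (Sym2 V') :=
  (Sym2.map φ '' (N \ {s(u0,v0)})) ∪
  {f | ∃ i < S.p.length, f = S.E i ∧ (Even i ↔ s(u0,v0) ∈ N)}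

lemma down_subset (N' : Set (Sym2 V')) : S.down N' ⊆ G.edgeSet := fun _ hf => hf.1

lemma e_mem_down {N' : Set (Sym2 V')} : s(u0,v0) ∈ S.down N' ↔ S.E 0 ∈ N' := by
  constructor
  · rintro ⟨_, ⟨_, h⟩ | ⟨hne, _⟩⟩
    · exact h
    · exact absurd rfl hne
  · exact fun h => ⟨S.hadj, Or.inl ⟨rfl, h⟩⟩

lemma img_mem_down {N' : Set (Sym2 V')} {x y : V} (hxy : G.Adj x y)
    (hne : s(x,y) ≠ s(u0,v0)) : s(x,y) ∈ S.down N' ↔ s(φ x, φ y) ∈ N' := by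
  constructor
  · rintro ⟨_, ⟨he, _⟩ | ⟨_, h⟩⟩
    · exact absurd he hne
    · rwa [Sym2.map_pair_eq] at h
  · intro h
    exact ⟨hxy, Or.inr ⟨hne, by rwa [Sym2.map_pair_eq]⟩⟩

lemma up_subset {N : Set (Sym2 V)} (hN : IsPM G N) : S.up N ⊆ G'.edgeSet := by
  rintro f (⟨g, ⟨hgN, hge⟩, rfl⟩ | ⟨i, hi, rfl, _⟩)
  · induction g with
    | h x y =>
      rw [Sym2.map_pair_eq]
      exact (SimpleGraph.mem_edgeSet _).2 (S.himg ((SimpleGraph.mem_edgeSet _).1 (hN.1 hgN))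
        (by simpa using hge))
  · exact S.E_mem_edgeSet hi

lemma mem_up_E {N : Set (Sym2 V)} (hN : IsPM G N) {i : ℕ} (hi : i < S.p.length) :
    S.E i ∈ S.up N ↔ (Even i ↔ s(u0,v0) ∈ N) := by
  constructor
  · rintro (⟨g, ⟨hgN, hge⟩, hmap⟩ | ⟨j, hj, hEq, hpar⟩)
    · exfalso
      induction g with
      | h x y =>
        rw [Sym2.map_pair_eq] at hmap
        exact S.E_ne_img hi ((SimpleGraph.mem_edgeSet _).1 (hN.1 hgN))
          (by simpa using hge) hmap.symm
    · rwa [S.E_inj hi hj hEq]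
  · exact fun h => Or.inr ⟨i, hi, rfl, h⟩

lemma mem_up_img {N : Set (Sym2 V)} {x y : V} (hxy : G.Adj x y)
    (hne : s(x,y) ≠ s(u0,v0)) : s(φ x, φ y) ∈ S.up N ↔ s(x,y) ∈ N := by
  constructor
  · rintro (⟨g, ⟨hgN, hge⟩, hmap⟩ | ⟨j, hj, hEq, _⟩)
    · have : g = s(x,y) := by
        apply Sym2.map.injective φ.injective
        rw [hmap, Sym2.map_pair_eq]
      rwa [← this]
    · exact absurd hEq.symm (S.E_ne_img hj hxy hne)
  · intro h
    exact Or.inl ⟨s(x,y), ⟨h, by simpa using hne⟩, by rw [Sym2.map_pair_eq]⟩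

lemma down_up {N : Set (Sym2 V)} (hN : IsPM G N) : S.down (S.up N) = N := by
  ext f
  constructor
  · rintro ⟨hfe, ⟨rfl, hE0⟩ | ⟨hne, hΦ⟩⟩
    · exact ((S.mem_up_E hN S.npos).1 hE0).1 (by simp)
    · induction f with
      | h x y =>
        rw [Sym2.map_pair_eq] at hΦ
        exact (S.mem_up_img ((SimpleGraph.mem_edgeSet _).1 hfe) hne).1 hΦ
  · intro hf
    refine ⟨hN.1 hf, ?_⟩
    by_cases hfe : f = s(u0,v0)
    · subst hfe
      exact Or.inl ⟨rfl, (S.mem_up_E hN S.npos).2 (by simp [hf])⟩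
    · refine Or.inr ⟨hfe, ?_⟩
      induction f with
      | h x y =>
        rw [Sym2.map_pair_eq]
        exact (S.mem_up_img ((SimpleGraph.mem_edgeSet _).1 (hN.1 hf)) hfe).2 hf
  
lemma up_down {N' : Set (Sym2 V')} (hN' : IsPM G' N') : S.up (S.down N') = N' := by
  ext f'
  constructor
  · rintro (⟨g, ⟨hgd, hge⟩, rfl⟩ | ⟨i, hi, rfl, hpar⟩)
    · rcases hgd with ⟨hgE, ⟨he, _⟩ | ⟨_, h⟩⟩
      · exact absurd he (by simpa using hge)
      · exact h
    · rw [S.alternation hN' i hi]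
      rwa [S.e_mem_down] at hpar
  · intro hf'
    rcases S.hedge f' (hN'.1 hf') with ⟨x, y, hxy, hne, rfl⟩ | hp
    · refine Or.inl ⟨s(x,y), ⟨(S.img_mem_down hxy hne).2 hf', by simpa using hne⟩,
        by rw [Sym2.map_pair_eq]⟩
    · obtain ⟨i, hi, rfl⟩ := edges_exists_getVert _ hp
      refine Or.inr ⟨i, hi, rfl, ?_⟩
      rw [S.e_mem_down]
      exact (S.alternation hN' i hi).1 hf'

/-- Each `N'`-edge containing `φ w` yields an edge of `down N'` containing `w`. -/
lemma down_isPM {N' : Set (Sym2 V')} (hN' : IsPM G' N') : IsPM G (S.down N') := by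
  refine ⟨S.down_subset N', fun w => ?_⟩
  obtain ⟨f', ⟨hf'N, hf'w⟩, huniq⟩ := hN'.2 (φ w)
  -- association: every edge of down N' containing w corresponds to an N'-edge containing φ w
  have assoc : ∀ g ∈ S.down N', w ∈ g → ∃ L, L ∈ N' ∧ φ w ∈ L ∧
      ((g = s(u0,v0) ∧ (∃ i < S.p.length, L = S.E i)) ∨
       (g ≠ s(u0,v0) ∧ L = Sym2.map φ g)) := by
    rintro g ⟨hgE, ⟨rfl, hE0⟩ | ⟨hne, hΦ⟩⟩ hw
    · rcases Sym2.mem_iff.1 hw with rfl | rfl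
      · exact ⟨S.E 0, hE0, by simp [E, Walk.getVert_zero], Or.inl ⟨rfl, 0, S.npos, rfl⟩⟩
      · refine ⟨S.E (S.p.length - 1), (S.E_last S.npos hN').2 hE0, ?_,
          Or.inl ⟨rfl, S.p.length - 1, by have := S.npos; omega, rfl⟩⟩
        have : S.p.getVert S.p.length ∈ S.E (S.p.length - 1) := by
          rw [S.mem_E_iff (by have := S.npos; omega) (le_refl _)]
          have := S.npos; omega
        rwa [Walk.getVert_length] at this
    · refine ⟨Sym2.map φ g, hΦ, ?_, Or.inr ⟨hne, rfl⟩⟩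
      exact mem_map_iff.2 hw
  have hex : ∃ g, g ∈ S.down N' ∧ w ∈ g := by
    rcases S.hedge f' (hN'.1 hf'N) with ⟨x, y, hxy, hne, rfl⟩ | hp
    · rcases Sym2.mem_iff.1 hf'w with h | h
      · have hwx : w = x := φ.injective h
        subst hwx
        exact ⟨s(w,y), (S.img_mem_down hxy hne).2 hf'N, by simp⟩
      · have hwy : w = y := φ.injective h
        subst hwy
        exact ⟨s(x,w), (S.img_mem_down hxy hne).2 hf'N, by simp⟩
    · -- f' is a path edge containing φ w, so w = u0 or w = v0 and E 0 ∈ N'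
      have hsup : φ w ∈ S.p.support := by
        rw [Walk.mem_support_iff_exists_getVert]
        obtain ⟨i, hi, rfl⟩ := edges_exists_getVert S.p hp
        rcases Sym2.mem_iff.1 hf'w with h | h
        · exact ⟨i, h.symm, by omega⟩
        · exact ⟨i+1, h.symm, by omega⟩
      have hE0 : S.E 0 ∈ N' := by
        obtain ⟨i, hi, rfl⟩ := edges_exists_getVert S.p hp
        rcases S.hsupp w hsup with hww | hww
        · rw [hww] at hf'w
          have hz : S.p.getVert 0 = φ u0 := Walk.getVert_zero S.p
          rcases Sym2.mem_iff.1 hf'w with h | h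
          · have hi0 : 0 = i := S.inj (by omega) (by omega) (hz.trans h)
            rw [← hi0] at hf'N
            exact hf'N
          · have hi0 : 0 = i + 1 := S.inj (by omega) (by omega) (hz.trans h)
            omega
        · rw [hww] at hf'w
          have hz : S.p.getVert S.p.length = φ v0 := Walk.getVert_length S.p
          rcases Sym2.mem_iff.1 hf'w with h | h
          · have hi0 : S.p.length = i := S.inj (le_refl _) (by omega) (hz.trans h)
            omega
          · have hi0 : S.p.length = i + 1 := S.inj (le_refl _) (by omega) (hz.trans h)
            have hi1 : i = S.p.length - 1 := by omega
            rw [hi1] at hf'N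
            exact (S.E_last (by omega) hN').1 hf'N
      rcases S.hsupp w hsup with hww | hww <;>
        exact ⟨s(u0,v0), S.e_mem_down.2 hE0, by simp [hww]⟩
  have huniq2 : ∀ g1 g2, (g1 ∈ S.down N' ∧ w ∈ g1) → (g2 ∈ S.down N' ∧ w ∈ g2) → g1 = g2 := by
    rintro g1 g2 ⟨hg1, hw1⟩ ⟨hg2, hw2⟩
    obtain ⟨L1, hL1N, hL1w, hc1⟩ := assoc g1 hg1 hw1
    obtain ⟨L2, hL2N, hL2w, hc2⟩ := assoc g2 hg2 hw2
    have hL12 : L1 = L2 := by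
      rw [huniq L1 ⟨hL1N, hL1w⟩, huniq L2 ⟨hL2N, hL2w⟩]
    rcases hc1 with ⟨he1, i, hi, hEi⟩ | ⟨hne1, hEi⟩ <;>
      rcases hc2 with ⟨he2, j, hj, hEj⟩ | ⟨hne2, hEj⟩
    · rw [he1, he2]
    · exfalso
      have hg2E := S.down_subset N' hg2
      induction g2 with
      | h x y =>
        rw [Sym2.map_pair_eq] at hEj
        exact S.E_ne_img hi ((SimpleGraph.mem_edgeSet _).1 hg2E)
          (by simpa using hne2) (hEi.symm.trans (hL12.trans hEj))
    · exfalso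
      have hg1E := S.down_subset N' hg1
      induction g1 with
      | h x y =>
        rw [Sym2.map_pair_eq] at hEi
        exact S.E_ne_img hj ((SimpleGraph.mem_edgeSet _).1 hg1E)
          (by simpa using hne1) (hEj.symm.trans (hL12.symm.trans hEi))
    · rw [hEi, hEj] at hL12
      exact Sym2.map.injective φ.injective hL12
  obtain ⟨g0, hg0⟩ := hex
  exact ⟨g0, hg0, fun y hy => huniq2 y g0 hy hg0⟩


lemma even_pred_iff {i : ℕ} (hi : 1 ≤ i) : Even (i-1) ↔ ¬ Even i := by
  obtain ⟨j, rfl⟩ : ∃ j, i = j + 1 := ⟨i-1, by omega⟩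
  simp [Nat.even_add_one]

lemma up_isPM {N : Set (Sym2 V)} (hN : IsPM G N) : IsPM G' (S.up N) := by
  refine ⟨S.up_subset hN, fun w' => ?_⟩
  have hz0 : S.p.getVert 0 = φ u0 := Walk.getVert_zero S.p
  have hzn : S.p.getVert S.p.length = φ v0 := Walk.getVert_length S.p
  have hnpos := S.npos
  have hev : Even (S.p.length - 1) := by
    obtain ⟨k, hk⟩ := S.hodd; exact ⟨k, by omega⟩
  -- classify w'
  have hcases : w' = φ u0 ∨ w' = φ v0 ∨
      (∃ x, w' = φ x ∧ x ≠ u0 ∧ x ≠ v0) ∨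
      (∃ i, 1 ≤ i ∧ i < S.p.length ∧ w' = S.p.getVert i) := by
    rcases S.hvert w' with ⟨x, rfl⟩ | hsup
    · by_cases hx1 : x = u0
      · exact Or.inl (by rw [hx1])
      by_cases hx2 : x = v0
      · exact Or.inr (Or.inl (by rw [hx2]))
      · exact Or.inr (Or.inr (Or.inl ⟨x, rfl, hx1, hx2⟩))
    · obtain ⟨i, hiw, hi⟩ := Walk.mem_support_iff_exists_getVert.1 hsup
      rcases Nat.eq_or_lt_of_le hi with hieq | hilt
      · subst hieq
        exact Or.inr (Or.inl (by rw [← hiw, hzn]))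
      rcases Nat.eq_zero_or_pos i with hi0 | hi0
      · subst hi0
        exact Or.inl (by rw [← hiw, hz0])
      · exact Or.inr (Or.inr (Or.inr ⟨i, hi0, hilt, hiw.symm⟩))
  rcases hcases with rfl | h | ⟨x, rfl, hx1, hx2⟩ | ⟨i, hi1, hi2, rfl⟩
  · -- w' = φ u0
    by_cases he : s(u0,v0) ∈ N
    · refine ⟨S.E 0, ⟨Or.inr ⟨0, hnpos, rfl, by simp [he]⟩,
        Sym2.mem_iff.2 (Or.inl hz0.symm)⟩, ?_⟩
      rintro g' ⟨(⟨g, ⟨hgN, hge⟩, rfl⟩ | ⟨j, hj, rfl, hpar⟩), hwg'⟩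
      · exfalso
        have hu0g : u0 ∈ g := mem_map_iff.1 hwg'
        have : g = s(u0,v0) := (hN.2 u0).unique ⟨hgN, hu0g⟩ ⟨he, by simp⟩
        exact hge (by simp [this])
      · rcases Sym2.mem_iff.1 hwg' with hh | hh
        · have : (0:ℕ) = j := S.inj (by omega) (by omega) (hz0.trans hh)
          rw [← this]
        · have : (0:ℕ) = j+1 := S.inj (by omega) (by omega) (hz0.trans hh)
          omega
    · obtain ⟨f, ⟨hfN, hfu⟩, hfu'⟩ := hN.2 u0
      have hfne : f ≠ s(u0,v0) := fun hh => he (hh ▸ hfN)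
      refine ⟨Sym2.map φ f, ⟨Or.inl ⟨f, ⟨hfN, by simpa using hfne⟩, rfl⟩,
        mem_map_iff.2 hfu⟩, ?_⟩
      rintro g' ⟨(⟨g, ⟨hgN, hge⟩, rfl⟩ | ⟨j, hj, rfl, hpar⟩), hwg'⟩
      · have : g = f := hfu' g ⟨hgN, mem_map_iff.1 hwg'⟩
        rw [this]
      · exfalso
        rcases Sym2.mem_iff.1 hwg' with hh | hh
        · have hj0 : (0:ℕ) = j := S.inj (by omega) (by omega) (hz0.trans hh)
          rw [← hj0] at hpar
          exact he (hpar.1 (by simp))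
        · have : (0:ℕ) = j+1 := S.inj (by omega) (by omega) (hz0.trans hh)
          omega
  · -- w' = φ v0
    subst h
    by_cases he : s(u0,v0) ∈ N
    · refine ⟨S.E (S.p.length - 1), ⟨Or.inr ⟨S.p.length - 1, by omega, rfl, by simp [hev, he]⟩, ?_⟩, ?_⟩
      · have hmem : S.p.getVert S.p.length ∈ S.E (S.p.length - 1) :=
          (S.mem_E_iff (by omega) (le_refl _)).2 (Or.inr (by omega))
        rwa [hzn] at hmem
      rintro g' ⟨(⟨g, ⟨hgN, hge⟩, rfl⟩ | ⟨j, hj, rfl, hpar⟩), hwg'⟩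
      · exfalso
        have hv0g : v0 ∈ g := mem_map_iff.1 hwg'
        have : g = s(u0,v0) := (hN.2 v0).unique ⟨hgN, hv0g⟩ ⟨he, by simp⟩
        exact hge (by simp [this])
      · rcases Sym2.mem_iff.1 hwg' with hh | hh
        · have : S.p.length = j := S.inj (le_refl _) (by omega) (hzn.trans hh)
          omega
        · have : S.p.length = j+1 := S.inj (le_refl _) (by omega) (hzn.trans hh)
          have : j = S.p.length - 1 := by omega
          rw [this]
    · obtain ⟨f, ⟨hfN, hfu⟩, hfu'⟩ := hN.2 v0
      have hfne : f ≠ s(u0,v0) := fun hh => he (hh ▸ hfN)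
      refine ⟨Sym2.map φ f, ⟨Or.inl ⟨f, ⟨hfN, by simpa using hfne⟩, rfl⟩,
        mem_map_iff.2 hfu⟩, ?_⟩
      rintro g' ⟨(⟨g, ⟨hgN, hge⟩, rfl⟩ | ⟨j, hj, rfl, hpar⟩), hwg'⟩
      · have : g = f := hfu' g ⟨hgN, mem_map_iff.1 hwg'⟩
        rw [this]
      · exfalso
        rcases Sym2.mem_iff.1 hwg' with hh | hh
        · have : S.p.length = j := S.inj (le_refl _) (by omega) (hzn.trans hh)
          omega
        · have hj0 : S.p.length = j+1 := S.inj (le_refl _) (by omega) (hzn.trans hh)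
          have hj1 : j = S.p.length - 1 := by omega
          rw [hj1] at hpar
          exact he (hpar.1 hev)
  · -- w' = φ x, x not an endpoint
    obtain ⟨f, ⟨hfN, hfx⟩, hfu'⟩ := hN.2 x
    have hfne : f ≠ s(u0,v0) := by
      rintro rfl
      rcases Sym2.mem_iff.1 hfx with rfl | rfl
      · exact hx1 rfl
      · exact hx2 rfl
    refine ⟨Sym2.map φ f, ⟨Or.inl ⟨f, ⟨hfN, by simpa using hfne⟩, rfl⟩,
      mem_map_iff.2 hfx⟩, ?_⟩
    rintro g' ⟨(⟨g, ⟨hgN, hge⟩, rfl⟩ | ⟨j, hj, rfl, hpar⟩), hwg'⟩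
    · have : g = f := hfu' g ⟨hgN, mem_map_iff.1 hwg'⟩
      rw [this]
    · exfalso
      rcases Sym2.mem_iff.1 hwg' with hh | hh
      · have hmem : φ x ∈ S.p.support :=
          Walk.mem_support_iff_exists_getVert.2 ⟨j, hh.symm, by omega⟩
        rcases S.hsupp x hmem with rfl | rfl
        · exact hx1 rfl
        · exact hx2 rfl
      · have hmem : φ x ∈ S.p.support :=
          Walk.mem_support_iff_exists_getVert.2 ⟨j+1, hh.symm, by omega⟩
        rcases S.hsupp x hmem with rfl | rfl
        · exact hx1 rfl
        · exact hx2 rfl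
  · -- w' internal
    have hmem_i : S.p.getVert i ∈ S.E i := (S.mem_E_iff hi2 (by omega)).2 (Or.inl rfl)
    have hmem_i1 : S.p.getVert i ∈ S.E (i-1) :=
      (S.mem_E_iff (by omega) (by omega)).2 (Or.inr (by omega))
    have hclass : ∀ g' ∈ S.up N, S.p.getVert i ∈ g' →
        (g' = S.E i ∧ (Even i ↔ s(u0,v0) ∈ N)) ∨
        (g' = S.E (i-1) ∧ (Even (i-1) ↔ s(u0,v0) ∈ N)) := by
      rintro g' (⟨g, ⟨hgN, hge⟩, rfl⟩ | ⟨j, hj, rfl, hpar⟩) hwg'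
      · exfalso
        obtain ⟨a, _, ha⟩ := Sym2.mem_map.1 hwg'
        exact S.internal_not_img hi1 hi2 a ha.symm
      · rcases (S.mem_E_iff hj (by omega)).1 hwg' with hh | hh
        · subst hh; exact Or.inl ⟨rfl, hpar⟩
        · have : j = i - 1 := by omega
          subst this; exact Or.inr ⟨rfl, hpar⟩
    by_cases hp : Even i ↔ s(u0,v0) ∈ N
    · refine ⟨S.E i, ⟨Or.inr ⟨i, hi2, rfl, hp⟩, hmem_i⟩, ?_⟩
      rintro g' ⟨hg', hwg'⟩
      rcases hclass g' hg' hwg' with ⟨h1, _⟩ | ⟨h1, h2⟩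
      · exact h1
      · exfalso
        rw [even_pred_iff hi1] at h2
        tauto
    · refine ⟨S.E (i-1), ⟨Or.inr ⟨i-1, by omega, rfl, by rw [even_pred_iff hi1]; tauto⟩,
        hmem_i1⟩, ?_⟩
      rintro g' ⟨hg', hwg'⟩
      rcases hclass g' hg' hwg' with ⟨h1, h2⟩ | ⟨h1, _⟩
      · exact absurd h2 hp
      · exact h1
lemma edges_exists_E {f : Sym2 V'} (hf : f ∈ S.p.edges) :
    ∃ i < S.p.length, f = S.E i :=
  edges_exists_getVert S.p hf

lemma lift_ne {f : Sym2 V} (hf : f ∈ G.edgeSet) (hne : f ≠ s(u0,v0)) :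
    ∃ x y, G.Adj x y ∧ s(x,y) ≠ s(u0,v0) ∧ f = s(x,y) := by
  induction f with
  | h x y => exact ⟨x, y, (SimpleGraph.mem_edgeSet _).1 hf, hne, rfl⟩

/-! ### lifting anti-forcing sets -/

open Classical in
noncomputable def liftEdge (St : Setup G G' u0 v0 φ) (f : Sym2 V) : Sym2 V' :=
  if f = s(u0,v0) then St.E 0 else Sym2.map φ f

lemma liftEdge_e : S.liftEdge s(u0,v0) = S.E 0 := by
  rw [liftEdge, if_pos rfl]

lemma liftEdge_ne {f : Sym2 V} (h : f ≠ s(u0,v0)) : S.liftEdge f = Sym2.map φ f := by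
  rw [liftEdge, if_neg h]

lemma liftEdge_injOn {T : Set (Sym2 V)} (hT : T ⊆ G.edgeSet) :
    Set.InjOn S.liftEdge T := by
  intro f1 h1 f2 h2 heq
  by_cases e1 : f1 = s(u0,v0) <;> by_cases e2 : f2 = s(u0,v0)
  · rw [e1, e2]
  · exfalso
    rw [e1, S.liftEdge_e, S.liftEdge_ne e2] at heq
    obtain ⟨x, y, hxy, hne, rfl⟩ := lift_ne (hT h2) e2
    exact S.E_ne_img S.npos hxy hne (by rwa [Sym2.map_pair_eq] at heq)
  · exfalso
    rw [e2, S.liftEdge_e, S.liftEdge_ne e1] at heq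
    obtain ⟨x, y, hxy, hne, rfl⟩ := lift_ne (hT h1) e1
    exact S.E_ne_img S.npos hxy hne (by rw [Sym2.map_pair_eq] at heq; rw [heq])
  · rw [S.liftEdge_ne e1, S.liftEdge_ne e2] at heq
    exact Sym2.map.injective φ.injective heq

lemma lift_antiforcing {N T : Set (Sym2 V)} (hN : IsPM G N)
    (hT : IsAntiForcingSet G N T) :
    IsAntiForcingSet G' (S.up N) (S.liftEdge '' T) := by
  obtain ⟨hTE, hTN, hTpm, hTu⟩ := hT
  have hdisj : (S.liftEdge '' T) ∩ S.up N = ∅ := by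
    rw [Set.eq_empty_iff_forall_notMem]
    rintro f' ⟨⟨f, hfT, rfl⟩, hfup⟩
    by_cases hfe : f = s(u0,v0)
    · subst hfe
      rw [S.liftEdge_e] at hfup
      have heN : s(u0,v0) ∈ N := by
        have := (S.mem_up_E hN S.npos).1 hfup
        simpa using this.1 (by simp)
      exact Set.eq_empty_iff_forall_notMem.1 hTN s(u0,v0) ⟨hfT, heN⟩
    · obtain ⟨x, y, hxy, hne, rfl⟩ := lift_ne (hTE hfT) hfe
      rw [S.liftEdge_ne hfe, Sym2.map_pair_eq] at hfup
      exact Set.eq_empty_iff_forall_notMem.1 hTN s(x,y)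
        ⟨hfT, (S.mem_up_img hxy hne).1 hfup⟩
  refine ⟨?_, hdisj, ?_, ?_⟩
  · rintro f' ⟨f, hfT, rfl⟩
    by_cases hfe : f = s(u0,v0)
    · rw [hfe, S.liftEdge_e]
      exact S.E_mem_edgeSet S.npos
    · obtain ⟨x, y, hxy, hne, rfl⟩ := lift_ne (hTE hfT) hfe
      rw [S.liftEdge_ne hfe, Sym2.map_pair_eq]
      exact (SimpleGraph.mem_edgeSet _).2 (S.himg hxy hne)
  · rw [isPM_deleteEdges_iff]
    refine ⟨S.up_isPM hN, ?_⟩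
    rw [Set.inter_comm]
    exact hdisj
  · intro K' hK'
    rw [isPM_deleteEdges_iff] at hK'
    obtain ⟨hK'pm, hK'T⟩ := hK'
    set K := S.down K' with hKdef
    have hKpm : IsPM G K := S.down_isPM hK'pm
    have hKT : K ∩ T = ∅ := by
      rw [Set.eq_empty_iff_forall_notMem]
      rintro f ⟨hfK, hfT⟩
      by_cases hfe : f = s(u0,v0)
      · subst hfe
        have hE0 : S.E 0 ∈ K' := S.e_mem_down.1 hfK
        have : S.liftEdge s(u0,v0) ∈ S.liftEdge '' T := ⟨_, hfT, rfl⟩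
        rw [S.liftEdge_e] at this
        exact Set.eq_empty_iff_forall_notMem.1 hK'T (S.E 0) ⟨hE0, this⟩
      · obtain ⟨x, y, hxy, hne, rfl⟩ := lift_ne (hTE hfT) hfe
        have hΦ : s(φ x, φ y) ∈ K' := (S.img_mem_down hxy hne).1 hfK
        have : S.liftEdge s(x,y) ∈ S.liftEdge '' T := ⟨_, hfT, rfl⟩
        rw [S.liftEdge_ne hfe, Sym2.map_pair_eq] at this
        exact Set.eq_empty_iff_forall_notMem.1 hK'T s(φ x, φ y) ⟨hΦ, this⟩
    have hKN : K = N := hTu K (isPM_deleteEdges_iff.2 ⟨hKpm, hKT⟩)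
    calc K' = S.up (S.down K') := (S.up_down hK'pm).symm
    _ = S.up N := by rw [← hKdef, hKN]

/-! ### projecting anti-forcing sets -/

open Classical in
noncomputable def projEdge (St : Setup G G' u0 v0 φ) (f' : Sym2 V') : Sym2 V :=
  if h : ∃ g : Sym2 V, g ∈ G.edgeSet ∧ g ≠ s(u0,v0) ∧ Sym2.map φ g = f'
  then h.choose else s(u0,v0)

lemma projEdge_img {g : Sym2 V} (hg : g ∈ G.edgeSet) (hne : g ≠ s(u0,v0)) :
    S.projEdge (Sym2.map φ g) = g := by
  rw [projEdge, dif_pos ⟨g, hg, hne, rfl⟩]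
  have h := (⟨g, hg, hne, rfl⟩ : ∃ g' : Sym2 V,
    g' ∈ G.edgeSet ∧ g' ≠ s(u0,v0) ∧ Sym2.map φ g' = Sym2.map φ g)
  exact Sym2.map.injective φ.injective h.choose_spec.2.2

lemma projEdge_path {i : ℕ} (hi : i < S.p.length) :
    S.projEdge (S.E i) = s(u0,v0) := by
  rw [projEdge, dif_neg]
  rintro ⟨g, hg, hne, hmap⟩
  obtain ⟨x, y, hxy, hne', rfl⟩ := lift_ne hg hne
  rw [Sym2.map_pair_eq] at hmap
  exact S.E_ne_img hi hxy hne' hmap.symm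

lemma projEdge_mem {f' : Sym2 V'} : S.projEdge f' ∈ G.edgeSet := by
  rw [projEdge]
  split
  · next h => exact h.choose_spec.1
  · exact (SimpleGraph.mem_edgeSet _).2 S.hadj

lemma proj_antiforcing {M : Set (Sym2 V)} (hM : IsPM G M) (heM : s(u0,v0) ∉ M)
    {T' : Set (Sym2 V')} (hT' : IsAntiForcingSet G' (S.up M) T') :
    IsAntiForcingSet G M (S.projEdge '' T') := by
  obtain ⟨hTE, hTN, hTpm, hTu⟩ := hT'
  have hMdisj : (S.projEdge '' T') ∩ M = ∅ := by
    rw [Set.eq_empty_iff_forall_notMem]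
    rintro f ⟨⟨f', hf'T, rfl⟩, hfM⟩
    rcases S.hedge f' (hTE hf'T) with ⟨x, y, hxy, hne, rfl⟩ | hpe
    · rw [← Sym2.map_pair_eq, S.projEdge_img (by rwa [SimpleGraph.mem_edgeSet]) hne] at hfM
      exact Set.eq_empty_iff_forall_notMem.1 hTN s(φ x, φ y)
        ⟨hf'T, (S.mem_up_img hxy hne).2 hfM⟩
    · obtain ⟨i, hi, rfl⟩ := S.edges_exists_E hpe
      rw [S.projEdge_path hi] at hfM
      exact heM hfM
  refine ⟨?_, hMdisj, ?_, ?_⟩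
  · rintro f ⟨f', _, rfl⟩
    exact S.projEdge_mem
  · rw [isPM_deleteEdges_iff]
    exact ⟨hM, by rw [Set.inter_comm]; exact hMdisj⟩
  · intro K hK
    rw [isPM_deleteEdges_iff] at hK
    obtain ⟨hKpm, hKT⟩ := hK
    have hK'T : S.up K ∩ T' = ∅ := by
      rw [Set.eq_empty_iff_forall_notMem]
      rintro f' ⟨hf'K, hf'T⟩
      rcases S.hedge f' (hTE hf'T) with ⟨x, y, hxy, hne, rfl⟩ | hpe
      · have hxyK : s(x,y) ∈ K := (S.mem_up_img hxy hne).1 hf'K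
        have : s(x,y) ∈ S.projEdge '' T' := by
          refine ⟨s(φ x, φ y), hf'T, ?_⟩
          rw [← Sym2.map_pair_eq]
          exact S.projEdge_img (by rwa [SimpleGraph.mem_edgeSet]) hne
        exact Set.eq_empty_iff_forall_notMem.1 hKT s(x,y) ⟨hxyK, this⟩
      · obtain ⟨i, hi, rfl⟩ := S.edges_exists_E hpe
        have hnotM : S.E i ∉ S.up M :=
          fun hh => Set.eq_empty_iff_forall_notMem.1 hTN (S.E i) ⟨hf'T, hh⟩
        rw [S.mem_up_E hM hi] at hnotM
        have heK : s(u0,v0) ∈ K := by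
          have := (S.mem_up_E hKpm hi).1 hf'K
          tauto
        have : s(u0,v0) ∈ S.projEdge '' T' :=
          ⟨S.E i, hf'T, S.projEdge_path hi⟩
        exact Set.eq_empty_iff_forall_notMem.1 hKT s(u0,v0) ⟨heK, this⟩
    have : S.up K = S.up M := hTu (S.up K) (isPM_deleteEdges_iff.2 ⟨S.up_isPM hKpm, hK'T⟩)
    calc K = S.down (S.up K) := (S.down_up hKpm).symm
    _ = S.down (S.up M) := by rw [this]
    _ = M := S.down_up hM

end Setup
end Bisub

/-- Let `M` be a perfect matching of `G` with `af(G,M) = Af(G)` and let `e` be an edge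
of `G` not in `M`. If `G'` is a bisubdivision of `G` on the single edge `e`, then
`Af(G') = Af(G)`. -/
theorem statement_7 {V V' : Type*} [Fintype V] [Fintype V']
    (G : SimpleGraph V) (M : Set (Sym2 V)) (hM : IsPM G M) (hmax : af G M = Af G)
    (e : Sym2 V) (he : e ∈ G.edgeSet) (heM : e ∉ M)
    (G' : SimpleGraph V') (h : IsBisubdivisionOn G {e} G') :
    Af G' = Af G := by
  classical
  obtain ⟨u0, v0, φ, rfl, ⟨S⟩⟩ := Bisub.setup_of_bisub he h
  have hup : IsPM G' (S.up M) := S.up_isPM hM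
  have key1 : ∀ N, IsPM G N → af G' (S.up N) ≤ af G N := by
    intro N hN
    obtain ⟨T, hT, hTc⟩ := Bisub.af_spec hN
    calc af G' (S.up N) ≤ (S.liftEdge '' T).ncard := Bisub.af_le (S.lift_antiforcing hN hT)
    _ = T.ncard := Set.ncard_image_of_injOn (S.liftEdge_injOn hT.1)
    _ = af G N := hTc
  have key2 : af G M ≤ af G' (S.up M) := by
    obtain ⟨T', hT', hTc⟩ := Bisub.af_spec hup
    calc af G M ≤ (S.projEdge '' T').ncard :=
      Bisub.af_le (S.proj_antiforcing hM heM hT')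
    _ ≤ T'.ncard := Set.ncard_image_le (Set.toFinite T')
    _ = af G' (S.up M) := hTc
  have h1 : Af G' ≤ Af G := by
    refine Bisub.Af_le ⟨S.up M, hup⟩ (fun N' hN' => ?_)
    have hrw : N' = S.up (S.down N') := (S.up_down hN').symm
    rw [hrw]
    exact (key1 _ (S.down_isPM hN')).trans (Bisub.af_le_Af (S.down_isPM hN'))
  have h2 : Af G ≤ Af G' := by
    rw [← hmax]
    exact key2.trans (Bisub.af_le_Af hup)
  exact le_antisymm h1 h2
end

section
/- If G' is a bisubdivision of a matchable graph G, then gf(G') = gf(G). -/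
set_option linter.unusedSectionVars false
set_option linter.unusedVariables false

open SimpleGraph

namespace GFAux

variable {V : Type*} {G : SimpleGraph V}

def altSet : ∀ {u v : V}, G.Walk u v → Bool → Set (Sym2 V)
  | _, _, SimpleGraph.Walk.nil, _ => ∅
  | _, _, @SimpleGraph.Walk.cons _ _ u x _ _ w, b =>
      (if b then {s(u, x)} else ∅) ∪ altSet w (!b)

@[simp] lemma altSet_nil {u : V} (b : Bool) :
    altSet (SimpleGraph.Walk.nil : G.Walk u u) b = ∅ := rfl

@[simp] lemma altSet_cons {u x v : V} (h : G.Adj u x) (w : G.Walk x v) (b : Bool) :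
    altSet (SimpleGraph.Walk.cons h w) b
      = (if b then {s(u, x)} else ∅) ∪ altSet w (!b) := rfl

lemma mem_edges_of_mem_altSet {u v : V} {w : G.Walk u v} {b : Bool} {e : Sym2 V}
    (he : e ∈ altSet w b) : e ∈ w.edges := by
  induction w generalizing b with
  | nil => simp [altSet_nil] at he
  | cons h w ih =>
    rw [altSet_cons] at he
    rcases he with he | he
    · rcases b with _ | _ <;> simp_all
    · simp [ih he]

lemma mem_support_of_mem_edge {u v y : V} {w : G.Walk u v} {e : Sym2 V}
    (he : e ∈ w.edges) (hy : y ∈ e) : y ∈ w.support := by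
  induction e with
  | _ p q =>
    rcases Sym2.mem_iff.1 hy with rfl | rfl
    · exact w.fst_mem_support_of_mem_edges he
    · exact w.snd_mem_support_of_mem_edges he

lemma cover {u v : V} (w : G.Walk u v) (b : Bool) (y : V) (hy : y ∈ w.support)
    (h1 : b = true ∨ y ≠ u) (h2 : y ≠ v ∨ (Odd w.length ↔ b = true)) :
    ∃ e ∈ altSet w b, y ∈ e := by
  induction w generalizing b with
  | nil =>
    simp only [SimpleGraph.Walk.support_nil, List.mem_singleton] at hy
    subst hy
    rcases h2 with h2 | h2
    · exact absurd rfl h2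
    · simp [Nat.odd_iff] at h2
      subst h2
      rcases h1 with h1 | h1
      · exact absurd h1 (by simp)
      · exact absurd rfl h1
  | @cons a x c h w ih =>
    by_cases hya : y = a
    · subst hya
      rcases h1 with rfl | h1
      · exact ⟨s(y, x), by simp [altSet_cons], by simp⟩
      · exact absurd rfl h1
    · have hy' : y ∈ w.support := by
        rcases (SimpleGraph.Walk.mem_support_iff _).1 hy with h' | h'
        · exact absurd h' hya
        · exact h'
      by_cases hyx : y = x
      · rcases b with _ | _
        · -- b = false, need altSet w true
          obtain ⟨e, he, hye⟩ := ih true hy' (Or.inl rfl) (by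
            rcases h2 with h2 | h2
            · left; exact h2
            · right
              simp only [SimpleGraph.Walk.length_cons] at h2
              rw [Nat.odd_add_one] at h2
              simp only [Bool.false_eq_true, iff_false] at h2
              simpa using h2)
          exact ⟨e, by simp [altSet_cons, he], hye⟩
        · subst hyx
          exact ⟨s(a, y), by simp [altSet_cons], by simp⟩
      · -- y ≠ x, y ≠ a
        obtain ⟨e, he, hye⟩ := ih (!b) hy' (by
          rcases b with _ | _
          · left; rfl
          · right; exact hyx) (by
          rcases h2 with h2 | h2
          · left; exact h2
          · right
            simp only [SimpleGraph.Walk.length_cons] at h2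
            rw [Nat.odd_add_one] at h2
            rcases b with _ | _
            · simp only [Bool.false_eq_true, iff_false] at h2
              simpa using h2
            · simp only [iff_true] at h2
              simp [Nat.not_odd_iff_even] at h2 ⊢
              exact h2)
        exact ⟨e, by simp [altSet_cons, he], hye⟩


/-- the start vertex is in no edge of `altSet w false` -/
lemma start_not_mem_false {u v : V} {w : G.Walk u v} (hw : w.IsPath) {e : Sym2 V}
    (he : e ∈ altSet w false) : u ∉ e := by
  cases w with
  | nil => simp at he
  | cons h w =>
    rw [altSet_cons] at he
    simp only [Bool.false_eq_true, if_false, Set.empty_union] at he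
    intro hu
    have := mem_support_of_mem_edge (mem_edges_of_mem_altSet he) hu
    have hnd := hw.support_nodup
    rw [SimpleGraph.Walk.support_cons, List.nodup_cons] at hnd
    exact hnd.1 this

/-- the end vertex is in no edge of `altSet w b` when `Odd w.length ↔ b = false` -/
lemma end_not_mem {u v : V} {w : G.Walk u v} (hw : w.IsPath)
    {b : Bool} (hb : Odd w.length ↔ b = false) {e : Sym2 V}
    (he : e ∈ altSet w b) : v ∉ e := by
  induction w generalizing b with
  | nil => simp at he
  | @cons a x c h w ih =>
    rw [altSet_cons] at he
    have hnd := hw.support_nodup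
    rw [SimpleGraph.Walk.support_cons, List.nodup_cons] at hnd
    rcases he with he | he
    · rcases b with _ | _
      · simp at he
      · simp only [if_pos rfl, Set.mem_singleton_iff] at he
        subst he
        -- Odd (length+1) ↔ false, so length odd, so w nonnil
        simp only [SimpleGraph.Walk.length_cons, Bool.true_eq_false, iff_false,
          Nat.odd_add_one, Nat.not_even_iff_odd, not_not] at hb
        intro hc
        rcases Sym2.mem_iff.1 hc with rfl | rfl
        · exact hnd.1 w.end_mem_support
        · -- c = x : then support w = x :: ... with c at the end; need w nonnil
          cases w with
          | nil => simp [Nat.odd_iff] at hb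
          | cons h' w' =>
            have hnd2 := hw.of_cons.support_nodup
            rw [SimpleGraph.Walk.support_cons, List.nodup_cons] at hnd2
            exact hnd2.1 (SimpleGraph.Walk.end_mem_support _)
    · refine ih hw.of_cons ?_ he
      rcases b with _ | _
      · simp only [SimpleGraph.Walk.length_cons, iff_true,
          Nat.odd_add_one, Nat.not_odd_iff_even] at hb
        simpa [Nat.not_odd_iff_even] using hb
      · simp only [SimpleGraph.Walk.length_cons, Bool.true_eq_false, iff_false,
          Nat.odd_add_one, Nat.not_even_iff_odd, not_not] at hb
        simpa using hb

/-- each vertex is in at most one edge of `altSet w b` -/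
lemma altSet_unique {u v : V} {w : G.Walk u v} (hw : w.IsPath) {b : Bool}
    {e₁ e₂ : Sym2 V} (h₁ : e₁ ∈ altSet w b) (h₂ : e₂ ∈ altSet w b)
    {y : V} (hy₁ : y ∈ e₁) (hy₂ : y ∈ e₂) : e₁ = e₂ := by
  induction w generalizing b with
  | nil => simp at h₁
  | @cons a x c h w ih =>
    rw [altSet_cons] at h₁ h₂
    have hnd := hw.support_nodup
    rw [SimpleGraph.Walk.support_cons, List.nodup_cons] at hnd
    rcases b with _ | _
    · simp only [Bool.false_eq_true, if_false, Set.empty_union] at h₁ h₂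
      exact ih hw.of_cons h₁ h₂
    · simp only [if_pos rfl, Set.union_def, Set.mem_setOf_eq, Set.mem_singleton_iff] at h₁ h₂
      rcases h₁ with rfl | h₁ <;> rcases h₂ with h₂ | h₂
      · rw [h₂]
      · -- y ∈ s(a,x) and y ∈ e₂ ∈ altSet w false
        exfalso
        rcases Sym2.mem_iff.1 hy₁ with rfl | rfl
        · exact hnd.1 (mem_support_of_mem_edge (mem_edges_of_mem_altSet h₂) hy₂)
        · exact start_not_mem_false hw.of_cons h₂ hy₂
      · exfalso
        subst h₂
        rcases Sym2.mem_iff.1 hy₂ with rfl | rfl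
        · exact hnd.1 (mem_support_of_mem_edge (mem_edges_of_mem_altSet h₁) hy₁)
        · exact start_not_mem_false hw.of_cons h₁ hy₁
      · exact ih hw.of_cons h₁ h₂


lemma classification' {u v : V} (w : G.Walk u v) : w.IsPath → ∀ N : Set (Sym2 V),
    (∀ e ∈ N, e ∈ w.edges) →
    (∀ e₁ ∈ N, ∀ e₂ ∈ N, ∀ y : V, y ∈ e₁ → y ∈ e₂ → e₁ = e₂) →
    (∀ y ∈ w.support, y ≠ u → y ≠ v → ∃ e ∈ N, y ∈ e) →
    N = altSet w true ∨ N = altSet w false := by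
  induction w with
  | nil =>
    intro hw N hsub huniq hcov
    left
    ext e
    simp only [altSet, Set.mem_empty_iff_false, iff_false]
    intro he
    simpa using hsub e he
  | @cons a x c h w ih =>
    intro hw N hsub huniq hcov
    have hnd := hw.support_nodup
    rw [SimpleGraph.Walk.support_cons, List.nodup_cons] at hnd
    by_cases hfirst : s(a, x) ∈ N
    · -- N = altSet (cons) true
      left
      have hN' : ∀ e ∈ N \ {s(a,x)}, e ∈ w.edges := by
        intro e he
        rcases he with ⟨heN, hne⟩
        have := hsub e heN
        rw [SimpleGraph.Walk.edges_cons, List.mem_cons] at this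
        rcases this with h' | h'
        · exact absurd h' hne
        · exact h'
      have hcov' : ∀ y ∈ w.support, y ≠ x → y ≠ c → ∃ e ∈ N \ {s(a,x)}, y ∈ e := by
        intro y hy hyx hyc
        have hya : y ≠ a := fun h' => hnd.1 (h' ▸ hy)
        obtain ⟨e, heN, hye⟩ := hcov y (by simp [SimpleGraph.Walk.support_cons, hy]) hya hyc
        refine ⟨e, ⟨heN, ?_⟩, hye⟩
        intro he
        rw [Set.mem_singleton_iff] at he
        subst he
        rcases Sym2.mem_iff.1 hye with rfl | rfl
        · exact hya rfl
        · exact hyx rfl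
      have hIH := ih hw.of_cons (N \ {s(a,x)}) hN'
        (fun e₁ h₁ e₂ h₂ y hy₁ hy₂ => huniq e₁ h₁.1 e₂ h₂.1 y hy₁ hy₂) hcov'
      have hF' : N \ {s(a,x)} = altSet w false := by
        rcases hIH with hT | hF
        · cases w with
          | nil => rw [hT]; rfl
          | @cons x x₂ c h' w'' =>
            exfalso
            have hfe : s(x, x₂) ∈ altSet (SimpleGraph.Walk.cons h' w'') true := by
              simp [altSet]
            rw [← hT] at hfe
            have heq := huniq (s(a,x)) hfirst (s(x,x₂)) hfe.1 x (by simp) (by simp)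
            rw [Sym2.eq_iff] at heq
            rcases heq with ⟨h1, _⟩ | ⟨h1, _⟩
            · exact h.ne h1
            · subst h1
              exact hnd.1 (by
                rw [SimpleGraph.Walk.support_cons]
                exact List.mem_cons_of_mem _ (SimpleGraph.Walk.start_mem_support w''))
        · exact hF
      have hNeq : N = insert (s(a,x)) (N \ {s(a,x)}) := by
        ext e
        constructor
        · intro he
          by_cases h' : e = s(a,x)
          · simp [h']
          · exact Set.mem_insert_of_mem _ ⟨he, h'⟩
        · intro he
          rcases he with rfl | ⟨he, _⟩
          · exact hfirst
          · exact he
      rw [hNeq, hF']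
      ext e
      simp only [altSet, if_pos rfl, Set.mem_insert_iff, Set.mem_union,
        Set.mem_singleton_iff, Bool.not_true]
      tauto
    · -- N = altSet (cons) false = altSet w true
      right
      have hN' : ∀ e ∈ N, e ∈ w.edges := by
        intro e he
        have := hsub e he
        rw [SimpleGraph.Walk.edges_cons, List.mem_cons] at this
        rcases this with h' | h'
        · exact absurd (h' ▸ he) hfirst
        · exact h'
      have hcov' : ∀ y ∈ w.support, y ≠ x → y ≠ c → ∃ e ∈ N, y ∈ e := by
        intro y hy hyx hyc
        exact hcov y (by simp [SimpleGraph.Walk.support_cons, hy])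
          (fun h' => hnd.1 (h' ▸ hy)) hyc
      have hIH := ih hw.of_cons N hN' huniq hcov'
      have hgoal : N = altSet w true := by
        rcases hIH with hT | hF
        · exact hT
        · cases w with
          | nil =>
            rw [hF]; rfl
          | @cons x x₂ c h' w'' =>
            exfalso
            have hxc : x ≠ c := by
              intro h'
              have hnd2 := hw.of_cons.support_nodup
              rw [SimpleGraph.Walk.support_cons, List.nodup_cons] at hnd2
              exact hnd2.1 (h' ▸ SimpleGraph.Walk.end_mem_support w'')
            obtain ⟨e, heN, hxe⟩ := hcov x
              (by simp [SimpleGraph.Walk.support_cons]) (fun h'' => h.ne h''.symm) hxc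
            rw [hF] at heN
            exact start_not_mem_false hw.of_cons heN hxe
      rw [hgoal]
      ext e
      simp only [altSet, Bool.false_eq_true, if_false, Set.empty_union, Bool.not_false]

lemma classification {u v : V} {w : G.Walk u v} (hw : w.IsPath) {N : Set (Sym2 V)}
    (hsub : ∀ e ∈ N, e ∈ w.edges)
    (huniq : ∀ e₁ ∈ N, ∀ e₂ ∈ N, ∀ y : V, y ∈ e₁ → y ∈ e₂ → e₁ = e₂)
    (hcov : ∀ y ∈ w.support, y ≠ u → y ≠ v → ∃ e ∈ N, y ∈ e) :
    N = altSet w true ∨ N = altSet w false :=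
  classification' w hw N hsub huniq hcov

lemma exists_start_mem_true {u v : V} (w : G.Walk u v) (hodd : Odd w.length) :
    ∃ e ∈ altSet w true, u ∈ e :=
  cover w true u w.start_mem_support (Or.inl rfl) (Or.inr (by simp [hodd]))

lemma altSet_reverse {u v : V} {w : G.Walk u v} (hw : w.IsPath) (hodd : Odd w.length)
    (b : Bool) : altSet w.reverse b = altSet w b := by
  have hodd' : Odd w.reverse.length := by rwa [SimpleGraph.Walk.length_reverse]
  have hcls := classification (N := altSet w.reverse b) hw
    (fun e he => by
      have := mem_edges_of_mem_altSet he
      rwa [SimpleGraph.Walk.edges_reverse, List.mem_reverse] at this)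
    (fun e₁ h₁ e₂ h₂ y hy₁ hy₂ => altSet_unique hw.reverse h₁ h₂ hy₁ hy₂)
    (fun y hy hyu hyv => cover w.reverse b y
      (by rwa [SimpleGraph.Walk.support_reverse, List.mem_reverse])
      (Or.inr hyv) (Or.inl hyu))
  rcases b with _ | _
  · -- b = false : rule out altTrue
    rcases hcls with hT | hF
    · exfalso
      obtain ⟨e, he, hue⟩ := exists_start_mem_true w hodd
      rw [← hT] at he
      exact end_not_mem hw.reverse (iff_of_true hodd' rfl) he hue
    · exact hF
  · rcases hcls with hT | hF
    · exact hT
    · exfalso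
      obtain ⟨e, he, hue⟩ := cover w.reverse true u
        (by rw [SimpleGraph.Walk.support_reverse, List.mem_reverse]
            exact w.start_mem_support)
        (Or.inl rfl) (Or.inr (iff_of_true hodd' rfl))
      rw [hF] at he
      exact start_not_mem_false hw he hue


section Graph

variable {V' : Type*} {G' : SimpleGraph V'}
variable (φ : V ↪ V') (P : ∀ ⦃u v : V⦄, G.Adj u v → G'.Walk (φ u) (φ v))

/-- the set of edges of the path replacing an edge -/
def pathEdges ⦃u v : V⦄ (h : G.Adj u v) : Set (Sym2 V') := {e' | e' ∈ (P h).edges}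

def liftPM (M : Set (Sym2 V)) : Set (Sym2 V') :=
  {e' | ∃ (u v : V) (h : G.Adj u v),
    (s(u, v) ∈ M ∧ e' ∈ altSet (P h) true) ∨ (s(u, v) ∉ M ∧ e' ∈ altSet (P h) false)}

def pmDown (M' : Set (Sym2 V')) : Set (Sym2 V) :=
  {e | e ∈ G.edgeSet ∧ ∃ (u v : V) (h : G.Adj u v), e = s(u, v) ∧
    M' ∩ pathEdges φ P h = altSet (P h) true}

variable (hP : ∀ ⦃u v : V⦄ (h : G.Adj u v), (P h).IsPath)
variable (hOdd : ∀ ⦃u v : V⦄ (h : G.Adj u v), Odd (P h).length)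
variable (hsymm : ∀ ⦃u v : V⦄ (h : G.Adj u v), P h.symm = (P h).reverse)
variable (hdisj : ∀ ⦃u v a b : V⦄ (h : G.Adj u v) (h' : G.Adj a b), s(u, v) ≠ s(a, b) →
      ∀ w, w ∈ (P h).support → w ∈ (P h').support → w = φ a ∨ w = φ b)
variable (hφsupp : ∀ ⦃u v : V⦄ (h : G.Adj u v) (x : V), φ x ∈ (P h).support → x = u ∨ x = v)
variable (hcovV : ∀ w : V', (∃ (u v : V) (h : G.Adj u v), w ∈ (P h).support) ∨ ∃ x : V, w = φ x)
variable (hedge : ∀ e ∈ G'.edgeSet, ∃ (u v : V) (h : G.Adj u v), e ∈ (P h).edges)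

lemma altSet_congr (hP : ∀ ⦃u v : V⦄ (h : G.Adj u v), (P h).IsPath)
    (hOdd : ∀ ⦃u v : V⦄ (h : G.Adj u v), Odd (P h).length)
    (hsymm : ∀ ⦃u v : V⦄ (h : G.Adj u v), P h.symm = (P h).reverse)
    ⦃u v a b : V⦄ (h : G.Adj u v) (h' : G.Adj a b) (heq : s(a, b) = s(u, v)) (bb : Bool) :
    altSet (P h') bb = altSet (P h) bb := by
  rcases Sym2.eq_iff.1 heq with ⟨rfl, rfl⟩ | ⟨rfl, rfl⟩
  · rfl
  · have : P h' = (P h).reverse := hsymm h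
    rw [this, altSet_reverse (hP h) (hOdd h)]

lemma pathEdges_congr (hsymm : ∀ ⦃u v : V⦄ (h : G.Adj u v), P h.symm = (P h).reverse)
    ⦃u v a b : V⦄ (h : G.Adj u v) (h' : G.Adj a b) (heq : s(a, b) = s(u, v)) :
    pathEdges φ P h' = pathEdges φ P h := by
  rcases Sym2.eq_iff.1 heq with ⟨rfl, rfl⟩ | ⟨rfl, rfl⟩
  · rfl
  · have : P h' = (P h).reverse := hsymm h
    ext e
    simp [pathEdges, this]

lemma edge_disjoint (hdisj : ∀ ⦃u v a b : V⦄ (h : G.Adj u v) (h' : G.Adj a b),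
      s(u, v) ≠ s(a, b) →
      ∀ w, w ∈ (P h).support → w ∈ (P h').support → w = φ a ∨ w = φ b)
    ⦃u v a b : V⦄ (h : G.Adj u v) (h' : G.Adj a b) (hne : s(u, v) ≠ s(a, b))
    {e : Sym2 V'} (he : e ∈ (P h).edges) (he' : e ∈ (P h').edges) : False := by
  induction e with
  | _ p q =>
    have hpq : p ≠ q := by
      have := (P h).edges_subset_edgeSet he
      rw [SimpleGraph.mem_edgeSet] at this
      exact this.ne
    have hp1 : p ∈ (P h).support := mem_support_of_mem_edge he (by simp)
    have hq1 : q ∈ (P h).support := mem_support_of_mem_edge he (by simp)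
    have hp2 : p ∈ (P h').support := mem_support_of_mem_edge he' (by simp)
    have hq2 : q ∈ (P h').support := mem_support_of_mem_edge he' (by simp)
    have hpab := hdisj h h' hne p hp1 hp2
    have hqab := hdisj h h' hne q hq1 hq2
    have hpuv := hdisj h' h hne.symm p hp2 hp1
    have hquv := hdisj h' h hne.symm q hq2 hq1
    have key : ∀ x y : V, p = φ x ∨ p = φ y → q = φ x ∨ q = φ y → s(p, q) = s(φ x, φ y) := by
      intro x y hp hq
      rcases hp with rfl | rfl <;> rcases hq with rfl | rfl
      · exact absurd rfl hpq
      · rfl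
      · exact Sym2.eq_swap
      · exact absurd rfl hpq
    have hmain : s(φ u, φ v) = s(φ a, φ b) :=
      (key u v hpuv hquv).symm.trans (key a b hpab hqab)
    apply hne
    have hinj := φ.injective
    rw [Sym2.eq_iff] at hmain
    rcases hmain with ⟨h1, h2⟩ | ⟨h1, h2⟩
    · rw [hinj h1, hinj h2]
    · rw [hinj h1, hinj h2, Sym2.eq_swap]



lemma sym2_exists {α : Type*} (e : Sym2 α) : ∃ c d, e = s(c, d) := by
  induction e with
  | _ c d => exact ⟨c, d, rfl⟩

include hP hOdd in
lemma endpoint_status ⦃u v : V⦄ (h : G.Adj u v) {bb : Bool} {e : Sym2 V'}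
    (he : e ∈ altSet (P h) bb) (hmem : φ u ∈ e ∨ φ v ∈ e) : bb = true := by
  rcases bb with _ | _
  · exfalso
    rcases hmem with hm | hm
    · exact start_not_mem_false (hP h) he hm
    · exact end_not_mem (hP h) (iff_of_true (hOdd h) rfl) he hm
  · rfl

include hP hOdd in
lemma distinct_alt ⦃u v : V⦄ (h : G.Adj u v) :
    altSet (P h) true ≠ altSet (P h) false := by
  intro heq
  obtain ⟨e, he, hue⟩ := exists_start_mem_true (P h) (hOdd h)
  exact start_not_mem_false (hP h) (heq ▸ he) hue

include hP hsymm hdisj hφsupp hedge in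
lemma status_class {M' : Set (Sym2 V')} (hM' : IsPM G' M') ⦃u v : V⦄ (h : G.Adj u v) :
    M' ∩ pathEdges φ P h = altSet (P h) true ∨
      M' ∩ pathEdges φ P h = altSet (P h) false := by
  apply classification (hP h)
  · intro e he
    exact he.2
  · intro e₁ h₁ e₂ h₂ y hy₁ hy₂
    exact ExistsUnique.unique (hM'.2 y) ⟨h₁.1, hy₁⟩ ⟨h₂.1, hy₂⟩
  · intro y hy hy1 hy2
    obtain ⟨e, ⟨heM, hye⟩, -⟩ := hM'.2 y
    refine ⟨e, ⟨heM, ?_⟩, hye⟩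
    obtain ⟨a, b, h', he'⟩ := hedge e (hM'.1 heM)
    by_cases hclass : s(a, b) = s(u, v)
    · have hpe := pathEdges_congr φ P hsymm h h' hclass
      show e ∈ pathEdges φ P h
      rw [← hpe]
      exact he'
    · exfalso
      have hy' : y ∈ (P h').support := mem_support_of_mem_edge he' hye
      rcases hdisj h h' (Ne.symm hclass) y hy hy' with rfl | rfl
      · rcases hφsupp h a hy with rfl | rfl
        · exact hy1 rfl
        · exact hy2 rfl
      · rcases hφsupp h b hy with rfl | rfl
        · exact hy1 rfl
        · exact hy2 rfl

include hP hOdd hsymm hdisj in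
lemma lift_inter {M : Set (Sym2 V)} ⦃u v : V⦄ (h : G.Adj u v) {bb : Bool}
    (hbb : bb = true ↔ s(u, v) ∈ M) :
    liftPM φ P M ∩ pathEdges φ P h = altSet (P h) bb := by
  ext e'
  constructor
  · rintro ⟨⟨a, b, h', hcase⟩, hpe⟩
    have hedges : e' ∈ (P h').edges := by
      rcases hcase with ⟨-, ht⟩ | ⟨-, ht⟩ <;> exact mem_edges_of_mem_altSet ht
    by_cases hclass : s(a, b) = s(u, v)
    · have hcongr := altSet_congr φ P hP hOdd hsymm h h' hclass
      rcases hcase with ⟨hm, ht⟩ | ⟨hm, ht⟩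
      · rw [hclass] at hm
        rw [(hbb.2 hm : bb = true), ← hcongr]
        exact ht
      · rw [hclass] at hm
        have : bb = false := by
          rcases bb with _ | _
          · rfl
          · exact absurd (hbb.1 rfl) hm
        rw [this, ← hcongr]
        exact ht
    · exact absurd (edge_disjoint φ P hdisj h h' (Ne.symm hclass) hpe hedges) id
  · intro he'
    refine ⟨⟨u, v, h, ?_⟩, mem_edges_of_mem_altSet he'⟩
    rcases bb with _ | _
    · exact Or.inr ⟨fun hm => Bool.false_ne_true (hbb.2 hm), he'⟩
    · exact Or.inl ⟨hbb.1 rfl, he'⟩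


include hP hOdd hsymm hdisj hφsupp hcovV in
lemma lift_isPM {M : Set (Sym2 V)} (hM : IsPM G M) : IsPM G' (liftPM φ P M) := by
  constructor
  · rintro e' ⟨a, b, h', hcase⟩
    have : e' ∈ (P h').edges := by
      rcases hcase with ⟨-, ht⟩ | ⟨-, ht⟩ <;> exact mem_edges_of_mem_altSet ht
    exact (P h').edges_subset_edgeSet this
  · intro y
    -- auxiliary: cross uniqueness
    have huniq : ∀ e₁ ∈ liftPM φ P M, ∀ e₂ ∈ liftPM φ P M, y ∈ e₁ → y ∈ e₂ → e₁ = e₂ := by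
      rintro e₁ ⟨a₁, b₁, h₁, hc₁⟩ e₂ ⟨a₂, b₂, h₂, hc₂⟩ hy₁ hy₂
      have hb₁ : ∃ bb₁, e₁ ∈ altSet (P h₁) bb₁ ∧ (bb₁ = true ↔ s(a₁, b₁) ∈ M) := by
        rcases hc₁ with ⟨hm, ht⟩ | ⟨hm, ht⟩
        · exact ⟨true, ht, iff_of_true rfl hm⟩
        · exact ⟨false, ht, iff_of_false Bool.false_ne_true hm⟩
      have hb₂ : ∃ bb₂, e₂ ∈ altSet (P h₂) bb₂ ∧ (bb₂ = true ↔ s(a₂, b₂) ∈ M) := by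
        rcases hc₂ with ⟨hm, ht⟩ | ⟨hm, ht⟩
        · exact ⟨true, ht, iff_of_true rfl hm⟩
        · exact ⟨false, ht, iff_of_false Bool.false_ne_true hm⟩
      obtain ⟨bb₁, ht₁, hiff₁⟩ := hb₁
      obtain ⟨bb₂, ht₂, hiff₂⟩ := hb₂
      by_cases hclass : s(a₁, b₁) = s(a₂, b₂)
      · -- same path
        have hcongr := altSet_congr φ P hP hOdd hsymm h₁ h₂ hclass.symm
        have hbeq : bb₁ = bb₂ := by
          rcases bb₁ with _ | _ <;> rcases bb₂ with _ | _
          · rfl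
          · exact absurd (hclass ▸ hiff₂.1 rfl) (fun hm => Bool.false_ne_true (hiff₁.2 hm))
          · exact absurd (hclass.symm ▸ hiff₁.1 rfl)
              (fun hm => Bool.false_ne_true (hiff₂.2 hm))
          · rfl
        rw [hbeq, ← hcongr bb₂] at ht₁
        exact altSet_unique (hP h₂) ht₁ ht₂ hy₁ hy₂
      · exfalso
        have hs₁ : y ∈ (P h₁).support :=
          mem_support_of_mem_edge (mem_edges_of_mem_altSet ht₁) hy₁
        have hs₂ : y ∈ (P h₂).support :=
          mem_support_of_mem_edge (mem_edges_of_mem_altSet ht₂) hy₂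
        obtain ⟨x₁, hx₁, rfl⟩ : ∃ x₁, (x₁ = a₁ ∨ x₁ = b₁) ∧ y = φ x₁ := by
          rcases hdisj h₂ h₁ (Ne.symm hclass) y hs₂ hs₁ with h' | h'
          · exact ⟨a₁, Or.inl rfl, h'⟩
          · exact ⟨b₁, Or.inr rfl, h'⟩
        obtain ⟨x₂, hx₂, hyx₂⟩ : ∃ x₂, (x₂ = a₂ ∨ x₂ = b₂) ∧ φ x₁ = φ x₂ := by
          rcases hdisj h₁ h₂ hclass (φ x₁) hs₁ hs₂ with h' | h'
          · exact ⟨a₂, Or.inl rfl, h'⟩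
          · exact ⟨b₂, Or.inr rfl, h'⟩
        have hxeq : x₁ = x₂ := φ.injective hyx₂
        -- both statuses true
        have hm₁ : s(a₁, b₁) ∈ M := by
          refine hiff₁.1 (endpoint_status φ P hP hOdd h₁ ht₁ ?_)
          rcases hx₁ with rfl | rfl
          · exact Or.inl hy₁
          · exact Or.inr hy₁
        have hm₂ : s(a₂, b₂) ∈ M := by
          refine hiff₂.1 (endpoint_status φ P hP hOdd h₂ ht₂ ?_)
          rcases hx₂ with h' | h' <;> rw [← hxeq] at h' <;> subst h'
          · exact Or.inl hy₂
          · exact Or.inr hy₂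
        have hx₁m : x₁ ∈ s(a₁, b₁) := by
          rcases hx₁ with rfl | rfl <;> simp
        have hx₂m : x₁ ∈ s(a₂, b₂) := by
          rcases hx₂ with h' | h' <;> rw [← hxeq] at h' <;> subst h' <;> simp
        exact hclass (ExistsUnique.unique (hM.2 x₁) ⟨hm₁, hx₁m⟩ ⟨hm₂, hx₂m⟩)
    -- existence
    have hex : ∃ e ∈ liftPM φ P M, y ∈ e := by
      have hφcase : ∀ x : V, y = φ x → ∃ e ∈ liftPM φ P M, y ∈ e := by
        rintro x rfl
        obtain ⟨e, ⟨heM, hxe⟩, -⟩ := hM.2 x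
        obtain ⟨c, d, rfl⟩ := sym2_exists e
        have h'' : G.Adj c d := (G.mem_edgeSet).1 (hM.1 heM)
        have hsup : φ x ∈ (P h'').support := by
          rcases Sym2.mem_iff.1 hxe with rfl | rfl
          · exact SimpleGraph.Walk.start_mem_support _
          · exact SimpleGraph.Walk.end_mem_support _
        obtain ⟨e', he', hye'⟩ := cover (P h'') true (φ x) hsup (Or.inl rfl)
          (Or.inr (iff_of_true (hOdd h'') rfl))
        exact ⟨e', ⟨c, d, h'', Or.inl ⟨heM, he'⟩⟩, hye'⟩
      rcases hcovV y with ⟨a, b, h', hy⟩ | ⟨x, rfl⟩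
      · by_cases hyφ : ∃ x, y = φ x
        · obtain ⟨x, rfl⟩ := hyφ
          exact hφcase x rfl
        · push_neg at hyφ
          by_cases hm : s(a, b) ∈ M
          · obtain ⟨e', he', hye'⟩ := cover (P h') true y hy (Or.inl rfl)
              (Or.inr (iff_of_true (hOdd h') rfl))
            exact ⟨e', ⟨a, b, h', Or.inl ⟨hm, he'⟩⟩, hye'⟩
          · obtain ⟨e', he', hye'⟩ := cover (P h') false y hy
              (Or.inr (hyφ a)) (Or.inl (hyφ b))
            exact ⟨e', ⟨a, b, h', Or.inr ⟨hm, he'⟩⟩, hye'⟩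
      · exact hφcase x rfl
    obtain ⟨e, he, hye⟩ := hex
    exact ⟨e, ⟨he, hye⟩, fun e₂ h₂ => huniq e₂ h₂.1 e he h₂.2 hye⟩

include hP hOdd hsymm hdisj hφsupp hedge in
lemma down_isPM {M' : Set (Sym2 V')} (hM' : IsPM G' M') : IsPM G (pmDown φ P M') := by
  constructor
  · exact fun e he => he.1
  · intro x
    have hex : ∃ e ∈ pmDown φ P M', x ∈ e := by
      obtain ⟨e', ⟨heM', hxe'⟩, -⟩ := hM'.2 (φ x)
      obtain ⟨a, b, h', he'⟩ := hedge e' (hM'.1 heM')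
      have hsup : φ x ∈ (P h').support := mem_support_of_mem_edge he' hxe'
      rcases status_class φ P hP hsymm hdisj hφsupp hedge hM' h' with htrue | hfalse
      · refine ⟨s(a, b), ⟨(G.mem_edgeSet).2 h', a, b, h', rfl, htrue⟩, ?_⟩
        rcases hφsupp h' x hsup with rfl | rfl <;> simp
      · exfalso
        have : e' ∈ altSet (P h') false := by
          rw [← hfalse]
          exact ⟨heM', he'⟩
        have hb := endpoint_status φ P hP hOdd h' this (by
          rcases hφsupp h' x hsup with rfl | rfl
          · exact Or.inl hxe'
          · exact Or.inr hxe')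
        exact Bool.false_ne_true hb
    obtain ⟨e, he, hxe⟩ := hex
    refine ⟨e, ⟨he, hxe⟩, ?_⟩
    rintro e₂ ⟨⟨-, a₂, b₂, h₂, rfl, ht₂⟩, hxe₂⟩
    obtain ⟨-, a₁, b₁, h₁, heq₁, ht₁⟩ := he
    -- produce the M'-edge at φ x on each path
    have hgen : ∀ ⦃a b : V⦄ (h' : G.Adj a b), M' ∩ pathEdges φ P h' = altSet (P h') true →
        x ∈ s(a, b) → ∃ e' ∈ M', φ x ∈ e' ∧ e' ∈ (P h').edges := by
      intro a b h' ht hx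
      have hsup : φ x ∈ (P h').support := by
        rcases Sym2.mem_iff.1 hx with rfl | rfl
        · exact SimpleGraph.Walk.start_mem_support _
        · exact SimpleGraph.Walk.end_mem_support _
      obtain ⟨e', he', hye'⟩ := cover (P h') true (φ x) hsup (Or.inl rfl)
        (Or.inr (iff_of_true (hOdd h') rfl))
      rw [← ht] at he'
      exact ⟨e', he'.1, hye', he'.2⟩
    have hx₁ : x ∈ s(a₁, b₁) := heq₁ ▸ hxe
    obtain ⟨e₁', he₁M, hφ₁, hp₁⟩ := hgen h₁ ht₁ hx₁
    obtain ⟨e₂', he₂M, hφ₂, hp₂⟩ := hgen h₂ ht₂ hxe₂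
    have : e₁' = e₂' := ExistsUnique.unique (hM'.2 (φ x)) ⟨he₁M, hφ₁⟩ ⟨he₂M, hφ₂⟩
    subst this
    by_cases hclass : s(a₂, b₂) = s(a₁, b₁)
    · rw [heq₁, hclass]
    · exact absurd (edge_disjoint φ P hdisj h₂ h₁ hclass hp₂ hp₁) id

include hP hOdd hsymm hdisj hφsupp hedge in
lemma status_true_iff {M' : Set (Sym2 V')} (hM' : IsPM G' M') ⦃u v : V⦄ (h : G.Adj u v) :
    s(u, v) ∈ pmDown φ P M' ↔ M' ∩ pathEdges φ P h = altSet (P h) true := by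
  constructor
  · rintro ⟨-, a, b, h', heq, ht⟩
    rw [pathEdges_congr φ P hsymm h h' heq.symm, altSet_congr φ P hP hOdd hsymm h h' heq.symm true] at ht
    exact ht
  · intro ht
    exact ⟨(G.mem_edgeSet).2 h, u, v, h, rfl, ht⟩

include hP hOdd hsymm hdisj hφsupp hedge in
lemma status_false_iff {M' : Set (Sym2 V')} (hM' : IsPM G' M') ⦃u v : V⦄ (h : G.Adj u v) :
    s(u, v) ∉ pmDown φ P M' ↔ M' ∩ pathEdges φ P h = altSet (P h) false := by
  constructor
  · intro hnot
    rcases status_class φ P hP hsymm hdisj hφsupp hedge hM' h with htrue | hfalse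
    · exact absurd ((status_true_iff φ P hP hOdd hsymm hdisj hφsupp hedge hM' h).2 htrue) hnot
    · exact hfalse
  · intro hf hmem
    have ht := (status_true_iff φ P hP hOdd hsymm hdisj hφsupp hedge hM' h).1 hmem
    exact distinct_alt φ P hP hOdd h (ht.symm.trans hf)

include hP hOdd hsymm hdisj hφsupp hedge in
lemma lift_down {M' : Set (Sym2 V')} (hM' : IsPM G' M') :
    liftPM φ P (pmDown φ P M') = M' := by
  ext e'
  constructor
  · rintro ⟨a, b, h', hcase⟩
    rcases hcase with ⟨hm, ht⟩ | ⟨hm, ht⟩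
    · have := (status_true_iff φ P hP hOdd hsymm hdisj hφsupp hedge hM' h').1 hm
      rw [← this] at ht
      exact ht.1
    · have := (status_false_iff φ P hP hOdd hsymm hdisj hφsupp hedge hM' h').1 hm
      rw [← this] at ht
      exact ht.1
  · intro he'
    obtain ⟨a, b, h', hp⟩ := hedge e' (hM'.1 he')
    by_cases hm : s(a, b) ∈ pmDown φ P M'
    · refine ⟨a, b, h', Or.inl ⟨hm, ?_⟩⟩
      rw [← (status_true_iff φ P hP hOdd hsymm hdisj hφsupp hedge hM' h').1 hm]
      exact ⟨he', hp⟩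
    · refine ⟨a, b, h', Or.inr ⟨hm, ?_⟩⟩
      rw [← (status_false_iff φ P hP hOdd hsymm hdisj hφsupp hedge hM' h').1 hm]
      exact ⟨he', hp⟩

include hP hOdd hsymm hdisj in
lemma down_lift {M : Set (Sym2 V)} (hM : IsPM G M) :
    pmDown φ P (liftPM φ P M) = M := by
  ext e
  constructor
  · rintro ⟨-, a, b, h', rfl, ht⟩
    by_cases hm : s(a, b) ∈ M
    · exact hm
    · exfalso
      have hf := lift_inter φ P hP hOdd hsymm hdisj (M := M) h'
        (bb := false) (iff_of_false Bool.false_ne_true hm)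
      exact distinct_alt φ P hP hOdd h' (ht.symm.trans hf)
  · intro he
    obtain ⟨a, b, rfl⟩ := sym2_exists e
    have h' : G.Adj a b := (G.mem_edgeSet).1 (hM.1 he)
    exact ⟨hM.1 he, a, b, h', rfl,
      lift_inter φ P hP hOdd hsymm hdisj h' (bb := true) (iff_of_true rfl he)⟩


lemma gfSet_nonempty : {n | ∃ S, IsGlobalForcingSet G S ∧ S.ncard = n}.Nonempty := by
  refine ⟨G.edgeSet.ncard, G.edgeSet, ⟨subset_rfl, ?_⟩, rfl⟩
  intro M₁ M₂ h₁ h₂ hne heq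
  apply hne
  rwa [Set.inter_eq_right.2 h₁.1, Set.inter_eq_right.2 h₂.1] at heq

include hP hOdd hsymm hdisj hφsupp hedge in
lemma dir1 [Finite V] [Nonempty V] : gf G' ≤ gf G := by
  obtain ⟨S, hSf, hcard⟩ := Nat.sInf_mem (gfSet_nonempty (G := G))
  letI : Inhabited (Sym2 V') :=
    ⟨s(φ (Classical.arbitrary V), φ (Classical.arbitrary V))⟩
  have hrep : ∀ e ∈ G.edgeSet, ∃ e' : Sym2 V',
      ∃ (u v : V) (h : G.Adj u v), e = s(u, v) ∧ e' ∈ altSet (P h) true ∧ φ u ∈ e' := by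
    intro e he
    obtain ⟨u, v, rfl⟩ := sym2_exists e
    have h : G.Adj u v := (G.mem_edgeSet).1 he
    obtain ⟨e', he', hu⟩ := exists_start_mem_true (P h) (hOdd h)
    exact ⟨e', u, v, h, rfl, he', hu⟩
  classical
  set f : Sym2 V → Sym2 V' := fun e =>
    if he : e ∈ G.edgeSet then (hrep e he).choose else default with hf
  have hspec : ∀ e ∈ S, ∃ (u v : V) (h : G.Adj u v),
      e = s(u, v) ∧ f e ∈ altSet (P h) true ∧ φ u ∈ f e := by
    intro e he
    have heE : e ∈ G.edgeSet := hSf.1 he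
    have := (hrep e heE).choose_spec
    rw [hf]
    simpa [dif_pos heE] using this
  have hforce : IsGlobalForcingSet G' (f '' S) := by
    constructor
    · rintro e' ⟨e, he, rfl⟩
      obtain ⟨u, v, h, -, ht, -⟩ := hspec e he
      exact (P h).edges_subset_edgeSet (mem_edges_of_mem_altSet ht)
    · intro M₁' M₂' h₁' h₂' hne' heq'
      have key : ∀ (N₁' N₂' : Set (Sym2 V')), IsPM G' N₁' → IsPM G' N₂' →
          f '' S ∩ N₁' = f '' S ∩ N₂' → ∀ e ∈ S, e ∈ pmDown φ P N₁' → e ∈ pmDown φ P N₂' := by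
        intro N₁' N₂' hN₁ hN₂ heqN e heS hm₁
        obtain ⟨u, v, h, rfl, hft, hfu⟩ := hspec e heS
        have h₁ := (status_true_iff φ P hP hOdd hsymm hdisj hφsupp hedge hN₁ h).1 hm₁
        have hfe₁ : f s(u, v) ∈ N₁' := by
          have : f s(u, v) ∈ N₁' ∩ pathEdges φ P h := h₁ ▸ hft
          exact this.1
        have hfS : f s(u, v) ∈ f '' S := Set.mem_image_of_mem f heS
        have hfe₂ : f s(u, v) ∈ N₂' := by
          have : f s(u, v) ∈ f '' S ∩ N₂' := heqN ▸ ⟨hfS, hfe₁⟩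
          exact this.2
        by_contra hnot
        have h₂ := (status_false_iff φ P hP hOdd hsymm hdisj hφsupp hedge hN₂ h).1 hnot
        have : f s(u, v) ∈ altSet (P h) false := by
          rw [← h₂]
          exact ⟨hfe₂, mem_edges_of_mem_altSet hft⟩
        exact start_not_mem_false (hP h) this hfu
      have hM₁ := down_isPM φ P hP hOdd hsymm hdisj hφsupp hedge h₁'
      have hM₂ := down_isPM φ P hP hOdd hsymm hdisj hφsupp hedge h₂'
      have hMne : pmDown φ P M₁' ≠ pmDown φ P M₂' := by
        intro hc
        apply hne'
        rw [← lift_down φ P hP hOdd hsymm hdisj hφsupp hedge h₁',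
          ← lift_down φ P hP hOdd hsymm hdisj hφsupp hedge h₂', hc]
      apply hSf.2 _ _ hM₁ hM₂ hMne
      ext e
      constructor
      · rintro ⟨heS, hm⟩
        exact ⟨heS, key M₁' M₂' h₁' h₂' heq' e heS hm⟩
      · rintro ⟨heS, hm⟩
        exact ⟨heS, key M₂' M₁' h₂' h₁' heq'.symm e heS hm⟩
  calc gf G' ≤ (f '' S).ncard := Nat.sInf_le ⟨f '' S, hforce, rfl⟩
    _ ≤ S.ncard := Set.ncard_image_le S.toFinite
    _ = gf G := hcard

include hP hOdd hsymm hdisj hφsupp hcovV hedge in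
lemma dir2 [Finite V'] [Nonempty V] : gf G ≤ gf G' := by
  obtain ⟨S', hSf, hcard⟩ := Nat.sInf_mem (gfSet_nonempty (G := G'))
  letI : Inhabited (Sym2 V) :=
    ⟨s(Classical.arbitrary V, Classical.arbitrary V)⟩
  have hrep : ∀ e' ∈ G'.edgeSet, ∃ e : Sym2 V,
      ∃ (u v : V) (h : G.Adj u v), e = s(u, v) ∧ e' ∈ (P h).edges := by
    intro e' he'
    obtain ⟨u, v, h, hp⟩ := hedge e' he'
    exact ⟨s(u, v), u, v, h, rfl, hp⟩
  classical
  set g : Sym2 V' → Sym2 V := fun e' =>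
    if he' : e' ∈ G'.edgeSet then (hrep e' he').choose else default with hg
  have hspec : ∀ e' ∈ S', ∃ (u v : V) (h : G.Adj u v),
      g e' = s(u, v) ∧ e' ∈ (P h).edges := by
    intro e' he'
    have heE : e' ∈ G'.edgeSet := hSf.1 he'
    have := (hrep e' heE).choose_spec
    rw [hg]
    simpa [dif_pos heE] using this
  have hforce : IsGlobalForcingSet G (g '' S') := by
    constructor
    · rintro e ⟨e', he', rfl⟩
      obtain ⟨u, v, h, heq, -⟩ := hspec e' he'
      rw [heq]
      exact (G.mem_edgeSet).2 h
    · intro M₁ M₂ h₁ h₂ hne heq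
      have hM₁' := lift_isPM φ P hP hOdd hsymm hdisj hφsupp hcovV h₁
      have hM₂' := lift_isPM φ P hP hOdd hsymm hdisj hφsupp hcovV h₂
      have hne' : liftPM φ P M₁ ≠ liftPM φ P M₂ := by
        intro hc
        apply hne
        rw [← down_lift φ P hP hOdd hsymm hdisj h₁,
          ← down_lift φ P hP hOdd hsymm hdisj h₂, hc]
      apply hSf.2 _ _ hM₁' hM₂' hne'
      have key : ∀ (N₁ N₂ : Set (Sym2 V)), IsPM G N₁ → IsPM G N₂ →
          g '' S' ∩ N₁ = g '' S' ∩ N₂ →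
          ∀ e' ∈ S', e' ∈ liftPM φ P N₁ → e' ∈ liftPM φ P N₂ := by
        intro N₁ N₂ hN₁ hN₂ heqN e' heS' hm₁
        obtain ⟨u, v, h, hgeq, hpe⟩ := hspec e' heS'
        have hgS : g e' ∈ g '' S' := Set.mem_image_of_mem g heS'
        by_cases hm : s(u, v) ∈ N₁
        · have hm2 : s(u, v) ∈ N₂ := by
            have : g e' ∈ g '' S' ∩ N₂ := heqN ▸ ⟨hgS, by rw [hgeq]; exact hm⟩
            rw [hgeq] at this
            exact this.2
          have l₁ := lift_inter φ P hP hOdd hsymm hdisj (M := N₁) h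
            (bb := true) (iff_of_true rfl hm)
          have l₂ := lift_inter φ P hP hOdd hsymm hdisj (M := N₂) h
            (bb := true) (iff_of_true rfl hm2)
          have : e' ∈ altSet (P h) true := by
            rw [← l₁]
            exact ⟨hm₁, hpe⟩
          have : e' ∈ liftPM φ P N₂ ∩ pathEdges φ P h := by
            rw [l₂]
            exact this
          exact this.1
        · have hm2 : s(u, v) ∉ N₂ := by
            intro hc
            apply hm
            have : g e' ∈ g '' S' ∩ N₁ := heqN.symm ▸ ⟨hgS, by rw [hgeq]; exact hc⟩
            rw [hgeq] at this
            exact this.2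
          have l₁ := lift_inter φ P hP hOdd hsymm hdisj (M := N₁) h
            (bb := false) (iff_of_false Bool.false_ne_true hm)
          have l₂ := lift_inter φ P hP hOdd hsymm hdisj (M := N₂) h
            (bb := false) (iff_of_false Bool.false_ne_true hm2)
          have : e' ∈ altSet (P h) false := by
            rw [← l₁]
            exact ⟨hm₁, hpe⟩
          have : e' ∈ liftPM φ P N₂ ∩ pathEdges φ P h := by
            rw [l₂]
            exact this
          exact this.1
      ext e'
      constructor
      · rintro ⟨heS', hm⟩
        exact ⟨heS', key M₁ M₂ h₁ h₂ heq e' heS' hm⟩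
      · rintro ⟨heS', hm⟩
        exact ⟨heS', key M₂ M₁ h₂ h₁ heq.symm e' heS' hm⟩
  calc gf G ≤ (g '' S').ncard := Nat.sInf_le ⟨g '' S', hforce, rfl⟩
    _ ≤ S'.ncard := Set.ncard_image_le S'.toFinite
    _ = gf G' := hcard


end Graph


lemma gf_eq_zero_of_isEmpty {W : Type*} [IsEmpty W] (H : SimpleGraph W) : gf H = 0 := by
  have h0 : (0 : ℕ) ∈ {n | ∃ S, IsGlobalForcingSet H S ∧ S.ncard = n} := by
    refine ⟨∅, ⟨Set.empty_subset _, ?_⟩, Set.ncard_empty _⟩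
    intro M₁ M₂ _ _ hne _
    refine absurd ?_ hne
    ext e
    obtain ⟨u, v, rfl⟩ := sym2_exists e
    exact isEmptyElim u
  exact Nat.le_zero.1 (Nat.sInf_le h0)

end GFAux

/-- If `G'` is a bisubdivision of a matchable graph `G`, then `gf(G') = gf(G)`. -/
theorem statement_8 {V V' : Type*} [Fintype V] [Fintype V']
    (G : SimpleGraph V) (G' : SimpleGraph V') (hG : Matchable G)
    (h : IsBisubdivision G G') :
    gf G' = gf G := by
  classical
  obtain ⟨S₀, -, φ, P, hP, hOdd, -, hsymm, hdisj, hφsupp, hcovV, hedge⟩ := h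
  rcases isEmpty_or_nonempty V with hV | hV
  · haveI : IsEmpty V' := ⟨fun w => by
      rcases hcovV w with ⟨u, -, -⟩ | ⟨x, -⟩
      · exact IsEmpty.false u
      · exact IsEmpty.false x⟩
    rw [GFAux.gf_eq_zero_of_isEmpty G, GFAux.gf_eq_zero_of_isEmpty G']
  · exact le_antisymm
      (GFAux.dir1 φ P hP hOdd hsymm hdisj hφsupp hedge)
      (GFAux.dir2 φ P hP hOdd hsymm hdisj hφsupp hcovV hedge)
end
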